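/- arXiv:2310.19575 — 13 statements merged into one kernel-verified Lean document; each statement's English description precedes it below -/
import Mathlib

section
/- Every finite group with the Magnus Property is solvable. -/
/-- A group has the Magnus Property if any two elements with the same normal
closure are conjugate or inverse-conjugate. -/
def MagnusProperty (G : Type*) [Group G] : Prop :=
  ∀ x y : G, Subgroup.normalClosure {x} = Subgroup.normalClosure {y} →
    IsConj x y ∨ IsConj x y⁻¹

/-!
Suppose `G` is not solvable. Let `R` be its solvable radical and `N` a minimal non-solvable
normal subgroup. For `x ∈ N \ R` the normal closure of `x` is not solvable, hence equals `N`;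
by the Magnus Property all elements of `N \ R` are then conjugate up to inversion and so share
one order `n`. Splitting such an `x` into its `p`-part and `p'`-part for a prime `p ∣ n`, one of
the two lies outside `R`, and only the `p`-part can have order `n`, so `n` is a power of `p`.
Hence `N / (N ∩ R)` is a `p`-group, thus solvable, and `N` is solvable after all.
-/

section

open Subgroup

variable {G : Type*} [Group G]

theorem IsConj.orderOf_eq {a b : G} (h : IsConj a b) : orderOf a = orderOf b :=
  let ⟨_, hc⟩ := h
  hc.orderOf_eq

theorem MagnusProperty.orderOf_eq (hG : MagnusProperty G) {x y : G}
    (h : normalClosure {x} = normalClosure {y}) : orderOf x = orderOf y := by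
  rcases hG x y h with hxy | hxy
  · exact hxy.orderOf_eq
  · rw [hxy.orderOf_eq, orderOf_inv]

theorem Subgroup.mem_of_pow_mem_of_coprime {K : Subgroup G} [K.Normal] {x : G} {a b : ℕ}
    (hab : a.Coprime b) (ha : x ^ a ∈ K) (hb : x ^ b ∈ K) : x ∈ K := by
  rw [← QuotientGroup.eq_one_iff, ← pow_eq_one_iff_of_coprime hab]
  simp only [← QuotientGroup.mk_pow, QuotientGroup.eq_one_iff]
  exact ⟨ha, hb⟩

theorem exists_orderOf_eq_prime_pow_of_forall_orderOf_eq [Finite G] {K : Subgroup G} [K.Normal]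
    {x : G} (hx : x ∉ K) (h : ∀ y ∉ K, orderOf y = orderOf x) :
    ∃ p b : ℕ, p.Prime ∧ orderOf x = p ^ b := by
  obtain ⟨n, hn⟩ : ∃ n, orderOf x = n := ⟨_, rfl⟩
  have hn0 : n ≠ 0 := hn ▸ (orderOf_pos x).ne'
  have hn1 : n ≠ 1 := fun h1 => hx (orderOf_eq_one_iff.mp (hn.trans h1) ▸ K.one_mem)
  obtain ⟨p, hp, hpn⟩ := Nat.exists_prime_and_dvd hn1
  refine ⟨p, n.factorization p, hp, ?_⟩
  have hproj_order : orderOf (x ^ ordProj[p] n) = ordCompl[p] n := by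
    rw [orderOf_pow_of_dvd (pow_ne_zero _ hp.ne_zero) (hn ▸ Nat.ordProj_dvd n p), hn]
  have hcompl_order : orderOf (x ^ ordCompl[p] n) = ordProj[p] n := by
    rw [orderOf_pow_of_dvd (Nat.ordCompl_pos p hn0).ne' (hn ▸ Nat.ordCompl_dvd n p), hn,
      Nat.div_div_self (Nat.ordProj_dvd n p) hn0]
  have hproj_mem : x ^ ordProj[p] n ∈ K := by
    by_contra hmem
    have hcompl_eq : ordCompl[p] n = n := hproj_order ▸ (h _ hmem).trans hn
    exact Nat.not_dvd_ordCompl hp hn0 (by rwa [hcompl_eq])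
  have hcompl_not_mem : x ^ ordCompl[p] n ∉ K := fun hmem =>
    hx (K.mem_of_pow_mem_of_coprime ((Nat.coprime_ordCompl hp hn0).pow_left _) hproj_mem hmem)
  rw [← hcompl_order, h _ hcompl_not_mem, hn]

theorem exists_isPGroup_quotient_of_orderOf_eq [Finite G] {K : Subgroup G} [K.Normal]
    (h : ∀ x y, x ∉ K → y ∉ K → orderOf x = orderOf y) :
    ∃ p : ℕ, p.Prime ∧ IsPGroup p (G ⧸ K) := by
  obtain ⟨p, b, hp, horder⟩ : ∃ p b : ℕ, p.Prime ∧ ∀ y ∉ K, orderOf y = p ^ b := by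
    by_cases hK : ∃ x, x ∉ K
    · obtain ⟨x, hx⟩ := hK
      obtain ⟨p, b, hp, hxb⟩ :=
        exists_orderOf_eq_prime_pow_of_forall_orderOf_eq hx fun y hy => h y x hy hx
      exact ⟨p, b, hp, fun y hy => (h y x hy hx).trans hxb⟩
    · exact ⟨2, 0, Nat.prime_two, fun y hy => absurd ⟨y, hy⟩ hK⟩
  refine ⟨p, hp, fun g => ⟨b, ?_⟩⟩
  induction g using QuotientGroup.induction_on with | H y => ?_
  by_cases hy : y ∈ K
  · simp [(QuotientGroup.eq_one_iff y).mpr hy]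
  · rw [← QuotientGroup.mk_pow, ← horder y hy, pow_orderOf_eq_one, QuotientGroup.mk_one]

theorem isSolvable_sup {H K : Subgroup G} [K.Normal] [Group.IsSolvable H] [Group.IsSolvable K] :
    Group.IsSolvable ↥(H ⊔ K) := by
  have : Group.IsSolvable (K.subgroupOf (H ⊔ K)) :=
    Group.isSolvable_of_isSolvable_injective
      (f := (subgroupOfEquivOfLe le_sup_right).toMonoidHom) (MulEquiv.injective _)
  have : Group.IsSolvable (↥(H ⊔ K) ⧸ K.subgroupOf (H ⊔ K)) :=
    Group.isSolvable_of_surjective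
      (f := (QuotientGroup.quotientInfEquivProdNormalQuotient H K).toMonoidHom)
      (MulEquiv.surjective _)
  exact (Group.isSolvable_iff_subgroup_quotient _).mpr ⟨‹_›, ‹_›⟩

theorem Subgroup.isSolvable_subgroupOf (H K : Subgroup G) [Group.IsSolvable H] :
    Group.IsSolvable (H.subgroupOf K) :=
  Group.isSolvable_of_isSolvable_injective (f := K.subtype.subgroupComap H)
    fun _ _ h => Subtype.val_injective (Subtype.val_injective (congrArg Subtype.val h :))

theorem exists_solvableRadical [Finite G] :
    ∃ R : Subgroup G, R.Normal ∧ Group.IsSolvable R ∧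
      ∀ K : Subgroup G, K.Normal → Group.IsSolvable K → K ≤ R := by
  obtain ⟨R, ⟨hRn, hRs⟩, hRmax⟩ := exists_maximal_of_wellFoundedGT
    (fun R : Subgroup G => R.Normal ∧ Group.IsSolvable R) ⟨⊥, inferInstance, inferInstance⟩
  refine ⟨R, hRn, hRs, fun K hKn hKs => ?_⟩
  have : Group.IsSolvable ↥(K ⊔ R) := isSolvable_sup
  exact le_sup_left.trans (hRmax ⟨Subgroup.sup_normal K R, this⟩ le_sup_right)

theorem normalClosure_singleton_eq_of_minimal {N R : Subgroup G}
    (hN : Minimal (fun N : Subgroup G => N.Normal ∧ ¬Group.IsSolvable N) N)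
    (hR : ∀ K : Subgroup G, K.Normal → Group.IsSolvable K → K ≤ R) {x : G} (hxN : x ∈ N)
    (hxR : x ∉ R) : normalClosure {x} = N := by
  have := hN.prop.1
  have hle : normalClosure {x} ≤ N := normalClosure_le_normal (Set.singleton_subset_iff.mpr hxN)
  by_contra hne
  have hsolv : Group.IsSolvable (normalClosure {x}) := by
    by_contra hns
    exact hne (le_antisymm hle (hN.le_of_le ⟨inferInstance, hns⟩ hle))
  exact hxR (hR _ inferInstance hsolv (subset_normalClosure rfl))

end

theorem finite_MP_isSolvable (G : Type*) [Group G] [Finite G]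
    (hG : MagnusProperty G) : IsSolvable G := by
  by_contra hns
  obtain ⟨R, hRn, hRs, hR⟩ := exists_solvableRadical (G := G)
  obtain ⟨N, -, hN⟩ := exists_minimal_le_of_wellFoundedLT
    (fun N : Subgroup G => N.Normal ∧ ¬Group.IsSolvable N) ⊤
    ⟨inferInstance, fun h => hns (Group.isSolvable_of_surjective
      (f := Subgroup.topEquiv.toMonoidHom) (MulEquiv.surjective _))⟩
  obtain ⟨p, hp, hpN⟩ := exists_isPGroup_quotient_of_orderOf_eq (K := R.subgroupOf N)
    fun x y hx hy => by
      rw [← Subgroup.orderOf_coe x, ← Subgroup.orderOf_coe y]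
      exact hG.orderOf_eq ((normalClosure_singleton_eq_of_minimal hN hR x.2 hx).trans
        (normalClosure_singleton_eq_of_minimal hN hR y.2 hy).symm)
  have : Fact p.Prime := ⟨hp⟩
  have := hpN.isNilpotent
  exact hN.prop.2 ((Group.isSolvable_iff_subgroup_quotient (R.subgroupOf N)).mpr
    ⟨R.isSolvable_subgroupOf N, inferInstance⟩)
end

section
/- If G is a finite group with the Magnus Property and N is a normal subgroup of G, then the quotient group G/N has the Magnus Property. -/
theorem quotient_MP (G : Type*) [Group G] [Finite G] (hG : MagnusProperty G)
    (N : Subgroup G) [N.Normal] : MagnusProperty (G ⧸ N) := by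
  intro xb yb h
  set π := QuotientGroup.mk' N with hπ
  have hsurj : Function.Surjective π := QuotientGroup.mk'_surjective N
  -- choose a lift y of yb minimizing the cardinality of its normal closure
  have hne : {y : G | π y = yb}.Nonempty := hsurj yb
  obtain ⟨y, hy, hymin⟩ := Set.exists_min_image {y : G | π y = yb}
    (fun y => Nat.card (Subgroup.normalClosure {y})) (Set.toFinite _) hne
  simp only [Set.mem_setOf_eq] at hy
  -- xb lies in the image of the normal closure of {y}
  have hmapy : Subgroup.map π (Subgroup.normalClosure {y}) =
      Subgroup.normalClosure {yb} := by
    rw [Subgroup.map_normalClosure _ _ hsurj, Set.image_singleton, hy]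
  have hxmem : xb ∈ Subgroup.map π (Subgroup.normalClosure {y}) := by
    rw [hmapy, ← h]; exact Subgroup.subset_normalClosure (Set.mem_singleton xb)
  obtain ⟨x, hxcl, hx⟩ := hxmem
  -- similarly yb lies in the image of the normal closure of {x}
  have hmapx : Subgroup.map π (Subgroup.normalClosure {x}) =
      Subgroup.normalClosure {xb} := by
    rw [Subgroup.map_normalClosure _ _ hsurj, Set.image_singleton, hx]
  have hymem : yb ∈ Subgroup.map π (Subgroup.normalClosure {x}) := by
    rw [hmapx, h]; exact Subgroup.subset_normalClosure (Set.mem_singleton yb)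
  obtain ⟨y', hy'cl, hy'⟩ := hymem
  -- chain of inclusions
  have h1 : Subgroup.normalClosure {x} ≤ Subgroup.normalClosure {y} :=
    Subgroup.normalClosure_le_normal (by simpa using hxcl)
  have h2 : Subgroup.normalClosure {y'} ≤ Subgroup.normalClosure {x} :=
    Subgroup.normalClosure_le_normal (by simpa using hy'cl)
  have hcard : Nat.card (Subgroup.normalClosure {y}) ≤
      Nat.card (Subgroup.normalClosure {y'}) := hymin y' hy'
  have heq : Subgroup.normalClosure {x} = Subgroup.normalClosure {y} := by
    refine Subgroup.eq_of_le_of_card_ge h1 ?_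
    exact le_trans hcard (Subgroup.card_le_of_le h2)
  rcases hG x y heq with hc | hc
  · left
    have := π.map_isConj hc
    rwa [hx, hy] at this
  · right
    have := π.map_isConj hc
    rw [hx] at this
    simpa [hy] using this
end

section
/- If G is a finite group with the Strong Magnus Property and N is a normal subgroup of G, then the quotient group G/N has the Strong Magnus Property. -/
/-- A group has the Strong Magnus Property if any two elements with the same
normal closure are conjugate. -/
def StrongMagnusProperty (G : Type*) [Group G] : Prop :=
  ∀ x y : G, Subgroup.normalClosure {x} = Subgroup.normalClosure {y} →
    IsConj x y

theorem quotient_SMP (G : Type*) [Group G] [Finite G] (hG : StrongMagnusProperty G)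
    (N : Subgroup G) [N.Normal] : StrongMagnusProperty (G ⧸ N) := by
  suffices h : ∀ n : ℕ, ∀ x y : G ⧸ N,
      Subgroup.normalClosure {x} = Subgroup.normalClosure {y} →
      ∀ a : G, QuotientGroup.mk a = x →
      (Subgroup.normalClosure {a} : Set G).ncard ≤ n → IsConj x y by
    intro x y hxy
    obtain ⟨a, ha⟩ := QuotientGroup.mk_surjective x
    exact h _ x y hxy a ha le_rfl
  intro n
  induction n with
  | zero =>
    intro x y hxy a ha hcard
    exfalso
    have hpos : 0 < (Subgroup.normalClosure {a} : Set G).ncard :=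
      (Set.ncard_pos (Set.toFinite _)).mpr ⟨1, Subgroup.one_mem _⟩
    omega
  | succ n ih =>
    intro x y hxy a ha hcard
    have hmap : Subgroup.map (QuotientGroup.mk' N) (Subgroup.normalClosure {a})
        = Subgroup.normalClosure {x} := by
      rw [Subgroup.map_normalClosure _ _ (QuotientGroup.mk'_surjective N),
        Set.image_singleton]
      congr
    have hy : y ∈ Subgroup.map (QuotientGroup.mk' N) (Subgroup.normalClosure {a}) := by
      rw [hmap, hxy]
      exact Subgroup.subset_normalClosure rfl
    obtain ⟨b, hb, hb2⟩ := hy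
    have hba : Subgroup.normalClosure {b} ≤ Subgroup.normalClosure {a} :=
      Subgroup.normalClosure_le_normal (by simpa using hb)
    by_cases heq : Subgroup.normalClosure {b} = Subgroup.normalClosure ({a} : Set G)
    · have hc : IsConj b a := hG b a heq
      have hc' := (QuotientGroup.mk' N).map_isConj hc
      rw [hb2, QuotientGroup.mk'_apply, ha] at hc'
      exact hc'.symm
    · have hlt : (Subgroup.normalClosure {b} : Set G).ncard
          < (Subgroup.normalClosure {a} : Set G).ncard := by
        apply Set.ncard_lt_ncard _ (Set.toFinite _)
        exact SetLike.coe_ssubset_coe.mpr (lt_of_le_of_ne hba heq)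
      exact (ih y x hxy.symm b hb2 (by omega)).symm
end

section
/- Let G be a finite group. Define A(G) := {x^G ∪ (x⁻¹)^G : x ∈ G}, where x^G denotes the conjugacy class of x in G, and B(G) := {⟨x⟩^G : x ∈ G}, where ⟨x⟩^G denotes the normal closure of {x} in G. Then G has the Magnus Property if and only if the cardinality of A(G) equals the cardinality of B(G). -/
section aux

variable {G : Type*} [Group G]

lemma isConj_inv' {x y : G} (h : IsConj x y) : IsConj x⁻¹ y⁻¹ := by
  obtain ⟨c, hc⟩ := isConj_iff.mp h
  exact isConj_iff.mpr ⟨c, by rw [← hc]; group⟩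

lemma ncl_eq_of_isConj {x y : G} (h : IsConj x y) :
    Subgroup.normalClosure {x} = Subgroup.normalClosure {y} := by
  obtain ⟨c, hc⟩ := isConj_iff.mp h
  have key : ∀ a b : G, (∃ c : G, c * a * c⁻¹ = b) →
      Subgroup.normalClosure {a} ≤ Subgroup.normalClosure {b} := by
    intro a b ⟨d, hd⟩
    apply Subgroup.normalClosure_le_normal
    rw [Set.singleton_subset_iff]
    have hb : b ∈ Subgroup.normalClosure {b} :=
      Subgroup.subset_normalClosure rfl
    have hmem := Subgroup.Normal.conj_mem (Subgroup.normalClosure_normal) b hb d⁻¹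
    have ha : a = d⁻¹ * b * d⁻¹⁻¹ := by rw [← hd]; group
    rw [ha]; exact hmem
  exact le_antisymm (key x y ⟨c, hc⟩) (key y x ⟨c⁻¹, by rw [← hc]; group⟩)

lemma ncl_inv (x : G) :
    Subgroup.normalClosure {x⁻¹} = Subgroup.normalClosure {x} := by
  have key : ∀ a : G, Subgroup.normalClosure {a⁻¹} ≤ Subgroup.normalClosure {a} := by
    intro a
    apply Subgroup.normalClosure_le_normal
    rw [Set.singleton_subset_iff]
    exact inv_mem (Subgroup.subset_normalClosure rfl)
  refine le_antisymm (key x) ?_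
  have := key x⁻¹
  rwa [inv_inv] at this

/-- The "A" map. -/
def fA (x : G) : Set G := conjugatesOf x ∪ conjugatesOf x⁻¹

lemma fA_eq_iff {x y : G} : fA x = fA y ↔ (IsConj x y ∨ IsConj x y⁻¹) := by
  constructor
  · intro h
    have hy : y ∈ fA y := Or.inl mem_conjugatesOf_self
    rw [← h] at hy
    rcases hy with hy | hy
    · exact Or.inl hy
    · right
      have : IsConj x⁻¹ y := hy
      simpa using isConj_inv' this
  · rintro (h | h)
    · unfold fA
      rw [h.conjugatesOf_eq, (isConj_inv' h).conjugatesOf_eq]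
    · unfold fA
      rw [h.conjugatesOf_eq, (isConj_inv' h).conjugatesOf_eq, inv_inv]
      exact Set.union_comm _ _

lemma key_fg {x y : G} (h : fA x = fA y) :
    Subgroup.normalClosure {x} = Subgroup.normalClosure ({y} : Set G) := by
  rcases fA_eq_iff.mp h with h | h
  · exact ncl_eq_of_isConj h
  · rw [ncl_eq_of_isConj h, ncl_inv]

end aux

theorem MP_iff_card_eq (G : Type*) [Group G] [Finite G] :
    MagnusProperty G ↔
      Nat.card {S : Set G | ∃ x : G, S = conjugatesOf x ∪ conjugatesOf x⁻¹} =
        Nat.card {N : Subgroup G | ∃ x : G, N = Subgroup.normalClosure {x}} := by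
  have : Finite (Subgroup G) := Finite.of_injective _ SetLike.coe_injective
  set A : Set (Set G) := {S : Set G | ∃ x : G, S = conjugatesOf x ∪ conjugatesOf x⁻¹}
  set B : Set (Subgroup G) := {N : Subgroup G | ∃ x : G, N = Subgroup.normalClosure {x}}
  have hAmem : ∀ x : G, fA x ∈ A := fun x => ⟨x, rfl⟩
  -- the map φ : A → B
  have exwit : ∀ S : A, ∃ x : G, (S : Set G) = fA x := fun S => S.2
  classical
  let wit : A → G := fun S => (exwit S).choose
  have hwit : ∀ S : A, (S : Set G) = fA (wit S) := fun S => (exwit S).choose_spec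
  let φ : A → B := fun S => ⟨Subgroup.normalClosure {wit S}, ⟨wit S, rfl⟩⟩
  have hφ : ∀ x : G, (φ ⟨fA x, hAmem x⟩ : Subgroup G) = Subgroup.normalClosure {x} := by
    intro x
    have : fA x = fA (wit ⟨fA x, hAmem x⟩) := hwit ⟨fA x, hAmem x⟩
    exact (key_fg this.symm)
  have hsurj : Function.Surjective φ := by
    rintro ⟨N, x, rfl⟩
    exact ⟨⟨fA x, hAmem x⟩, Subtype.ext (hφ x)⟩
  constructor
  · intro hMP
    have hinj : Function.Injective φ := by
      intro S T h
      have h' : Subgroup.normalClosure {wit S} = Subgroup.normalClosure {wit T} :=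
        congrArg Subtype.val h
      have := hMP _ _ h'
      have : fA (wit S) = fA (wit T) := fA_eq_iff.mpr this
      exact Subtype.ext (by rw [hwit S, hwit T, this])
    exact Nat.card_eq_of_bijective φ ⟨hinj, hsurj⟩
  · intro hcard
    have hbij : Function.Bijective φ :=
      (Nat.bijective_iff_surjective_and_card φ).mpr ⟨hsurj, hcard⟩
    intro x y h
    have h2 : φ ⟨fA x, hAmem x⟩ = φ ⟨fA y, hAmem y⟩ :=
      Subtype.ext (by rw [hφ x, hφ y, h])
    have h3 : fA x = fA y := congrArg Subtype.val (hbij.1 h2)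
    exact fA_eq_iff.mp h3
end

section
/- If G is a nontrivial finite nilpotent group with the Magnus Property and p is a prime dividing the order of G, then p ∈ {2, 3}. -/
open Subgroup

section

variable {G : Type*} [Group G]

theorem Subgroup.normal_of_le_center {H : Subgroup G} (h : H ≤ center G) : H.Normal :=
  ⟨fun n hn g => by rwa [mem_center_iff.mp (h hn) g, mul_inv_cancel_right]⟩

theorem Subgroup.inf_center_ne_bot [Group.IsNilpotent G] {N : Subgroup G} [N.Normal]
    (hN : N ≠ ⊥) : N ⊓ center G ≠ ⊥ := by
  intro hNZ
  have h : ∀ n, N ⊓ upperCentralSeries G n = ⊥ := by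
    intro n
    induction n with
    | zero => exact inf_bot_eq N
    | succ n ih =>
      have hcomm : ⁅N ⊓ upperCentralSeries G (n + 1), ⊤⁆ = ⊥ := eq_bot_iff.mpr <| ih ▸ le_inf
        ((commutator_mono inf_le_left le_rfl).trans (commutator_le_left N ⊤))
        ((commutator_mono inf_le_right le_rfl).trans (commutator_upperCentralSeries_top_le G n))
      rw [commutator_eq_bot_iff_le_centralizer, coe_top, centralizer_univ] at hcomm
      exact eq_bot_iff.mpr (hNZ ▸ le_inf inf_le_left hcomm)
  obtain ⟨n, hn⟩ := Group.IsNilpotent.nilpotent G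
  exact hN (by simpa [hn] using h n)

theorem exists_mem_center_orderOf_eq_of_dvd_card [Finite G] [Group.IsNilpotent G] {p : ℕ}
    (hp : p.Prime) (hdvd : p ∣ Nat.card G) : ∃ x ∈ center G, orderOf x = p := by
  have := Fact.mk hp
  obtain ⟨P⟩ : Nonempty (Sylow p G) := inferInstance
  have hPZ : (P : Subgroup G) ⊓ center G ≠ ⊥ := inf_center_ne_bot (P.ne_bot_of_dvd_card hdvd)
  obtain hcard | hpcard := (P.isPGroup'.to_inf_left (K := center G)).card_eq_or_dvd
  · exact absurd (card_eq_one.mp hcard) hPZ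
  obtain ⟨x, hx⟩ := exists_prime_orderOf_dvd_card' p hpcard
  exact ⟨x, x.2.2, (orderOf_coe x).trans hx⟩

theorem Subgroup.normalClosure_singleton_eq_zpowers {x : G} (hx : x ∈ center G) :
    normalClosure {x} = zpowers x :=
  have := normal_of_le_center (zpowers_le.mpr hx)
  le_antisymm (normalClosure_le_normal (by simp)) (zpowers_le.mpr (subset_normalClosure rfl))

theorem zpowers_pow_eq_zpowers_of_coprime {x : G} {n : ℕ} (h : (orderOf x).Coprime n) :
    zpowers (x ^ n) = zpowers x :=
  le_antisymm (zpowers_le.mpr (npow_mem_zpowers x n))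
    (zpowers_le.mpr (mem_zpowers_pow_iff.mpr (Nat.coprime_comm.mp h)))

theorem MagnusProperty.pow_three_eq_one_of_mem_center (hG : MagnusProperty G) {x : G}
    (hx : x ∈ center G) (hodd : Odd (orderOf x)) : x ^ 3 = 1 := by
  have hclosure : normalClosure {x} = normalClosure {x ^ 2} := by
    rw [normalClosure_singleton_eq_zpowers hx, normalClosure_singleton_eq_zpowers (pow_mem hx 2),
      zpowers_pow_eq_zpowers_of_coprime hodd.coprime_two_right]
  rcases hG x (x ^ 2) hclosure with hconj | hconj
  · have : x = 1 := by simpa [pow_two] using hconj.eq_of_left_mem_center hx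
    simp [this]
  · rw [pow_succ']
    exact eq_inv_iff_mul_eq_one.mp (hconj.eq_of_left_mem_center hx)

end

theorem finite_nilpotent_MP_prime_divisors_general (G : Type*) [Group G] [Finite G]
    (hnilp : Group.IsNilpotent G)
    (hG : MagnusProperty G) (p : ℕ) (hp : p.Prime) (hdvd : p ∣ Nat.card G) :
    p ∈ ({2, 3} : Set ℕ) := by
  obtain ⟨x, hx, hxp⟩ := exists_mem_center_orderOf_eq_of_dvd_card hp hdvd
  rcases hp.eq_two_or_odd' with rfl | hodd
  · exact Or.inl rfl
  have hx3 : x ^ 3 = 1 := hG.pow_three_eq_one_of_mem_center hx (hxp ▸ hodd)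
  have hp3 : p ∣ 3 := hxp ▸ orderOf_dvd_of_pow_eq_one hx3
  exact Or.inr ((Nat.prime_dvd_prime_iff_eq hp Nat.prime_three).mp hp3)

theorem finite_nilpotent_MP_prime_divisors (G : Type*) [Group G] [Finite G] [Nontrivial G]
    (hnilp : Group.IsNilpotent G)
    (hG : MagnusProperty G) (p : ℕ) (hp : p.Prime) (hdvd : p ∣ Nat.card G) :
    p ∈ ({2, 3} : Set ℕ) :=
  finite_nilpotent_MP_prime_divisors_general G hnilp hG p hp hdvd
end

section
/- If G is a nontrivial finite nilpotent group with the Strong Magnus Property, then G is a 2-group, i.e., the order of G is a power of 2. -/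
/-!
If `x` has odd order then `x` and `x ^ 2` generate each other, so they have the same normal
closure, and the Strong Magnus Property makes them conjugate, say `g * x * g⁻¹ = x ^ 2`.
Then `⁅g, x⁆ = x`, which puts `x` in every term of the lower central series; in a nilpotent
group this forces `x = 1`. By Cauchy's theorem a finite such group has no odd prime divisor.
-/

open scoped commutatorElement

section

variable {G : Type*} [Group G]

theorem mem_lowerCentralSeries_of_commutatorElement_eq_self {g x : G} (h : ⁅g, x⁆ = x) (n : ℕ) :
    x ∈ (⊤ : Subgroup G).lowerCentralSeries n := by
  induction n with
  | zero => exact Subgroup.mem_top x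
  | succ n ih =>
    rw [Subgroup.lowerCentralSeries_succ, Subgroup.commutator_comm]
    exact h ▸ Subgroup.commutator_mem_commutator (Subgroup.mem_top g) ih

theorem Group.IsNilpotent.eq_one_of_commutatorElement_eq_self [Group.IsNilpotent G] {g x : G}
    (h : ⁅g, x⁆ = x) : x = 1 := by
  obtain ⟨n, hn⟩ := Subgroup.nilpotent_iff_lowerCentralSeries.mp ‹Group.IsNilpotent G›
  simpa [hn] using mem_lowerCentralSeries_of_commutatorElement_eq_self h n

theorem Group.IsNilpotent.eq_one_of_isConj_sq [Group.IsNilpotent G] {x : G}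
    (h : IsConj x (x ^ 2)) : x = 1 := by
  obtain ⟨g, hg⟩ := isConj_iff.mp h
  refine eq_one_of_commutatorElement_eq_self (g := g) ?_
  rw [commutatorElement_def, hg, pow_two, mul_inv_cancel_right]

theorem normalClosure_singleton_pow_of_coprime {x : G} {k : ℕ} (hk : k.Coprime (orderOf x)) :
    Subgroup.normalClosure {x ^ k} = Subgroup.normalClosure {x} := by
  apply le_antisymm <;> apply Subgroup.normalClosure_le_normal <;> rw [Set.singleton_subset_iff]
  · exact pow_mem (Subgroup.subset_normalClosure (Set.mem_singleton x)) k
  · have hx : x ∈ Subgroup.zpowers (x ^ k) := mem_zpowers_pow_iff.mpr hk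
    rw [Subgroup.zpowers_eq_closure] at hx
    exact Subgroup.closure_le_normalClosure hx

theorem StrongMagnusProperty.isConj_pow_of_coprime (hG : StrongMagnusProperty G) {x : G} {k : ℕ}
    (hk : k.Coprime (orderOf x)) : IsConj x (x ^ k) :=
  hG _ _ (normalClosure_singleton_pow_of_coprime hk).symm

theorem StrongMagnusProperty.eq_one_of_odd_orderOf [Group.IsNilpotent G]
    (hG : StrongMagnusProperty G) {x : G} (hx : Odd (orderOf x)) : x = 1 :=
  Group.IsNilpotent.eq_one_of_isConj_sq (hG.isConj_pow_of_coprime (Nat.coprime_two_left.mpr hx))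

end

theorem finite_nilpotent_SMP_is_two_group_general (G : Type*) [Group G] [Finite G]
    (hnilp : Group.IsNilpotent G) (hG : StrongMagnusProperty G) :
    ∃ n : ℕ, Nat.card G = 2 ^ n := by
  refine (Nat.card G).eq_two_pow_or_exists_odd_prime_and_dvd.resolve_right ?_
  rintro ⟨p, hp, hdvd, hodd⟩
  have := Fact.mk hp
  obtain ⟨x, hx⟩ := exists_prime_orderOf_dvd_card' p hdvd
  have hx1 : x = 1 := hG.eq_one_of_odd_orderOf (hx ▸ hodd)
  exact hp.one_lt.ne' (by rw [← hx, hx1, orderOf_one])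

theorem finite_nilpotent_SMP_is_two_group (G : Type*) [Group G] [Finite G] [Nontrivial G]
    (hnilp : Group.IsNilpotent G) (hG : StrongMagnusProperty G) :
    ∃ n : ℕ, Nat.card G = 2 ^ n :=
  finite_nilpotent_SMP_is_two_group_general G hnilp hG
end

section
/- Let A and B be finite groups such that B has the Strong Magnus Property. Then the direct product A × B has the Magnus Property if and only if A has the Magnus Property. -/
lemma nc_inv {G : Type*} [Group G] (x : G) :
    Subgroup.normalClosure ({x⁻¹} : Set G) = Subgroup.normalClosure {x} := by
  apply le_antisymm
  · apply Subgroup.normalClosure_le_normal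
    simp only [Set.singleton_subset_iff, SetLike.mem_coe]
    exact inv_mem (Subgroup.subset_normalClosure rfl)
  · apply Subgroup.normalClosure_le_normal
    simp only [Set.singleton_subset_iff, SetLike.mem_coe]
    simpa using inv_mem (Subgroup.subset_normalClosure (s := ({x⁻¹} : Set G)) rfl)

lemma isConj_prod {A B : Type*} [Group A] [Group B] {a a' : A} {b b' : B}
    (ha : IsConj a a') (hb : IsConj b b') : IsConj (a, b) (a', b') := by
  rw [isConj_iff] at *
  obtain ⟨c, hc⟩ := ha
  obtain ⟨d, hd⟩ := hb
  exact ⟨(c, d), Prod.ext hc hd⟩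

lemma nc_inl {A B : Type*} [Group A] [Group B] (z : A) :
    Subgroup.normalClosure {((z, 1) : A × B)} =
      Subgroup.map (MonoidHom.inl A B) (Subgroup.normalClosure {z}) := by
  apply le_antisymm
  · haveI : (Subgroup.map (MonoidHom.inl A B) (Subgroup.normalClosure {z})).Normal := by
      constructor
      rintro n hn g
      obtain ⟨m, hm, rfl⟩ := hn
      refine ⟨g.1 * m * g.1⁻¹, Subgroup.normalClosure_normal.conj_mem m hm g.1, ?_⟩
      ext <;> simp [MonoidHom.inl]
    apply Subgroup.normalClosure_le_normal
    simp only [Set.singleton_subset_iff, SetLike.mem_coe]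
    exact ⟨z, Subgroup.subset_normalClosure rfl, rfl⟩
  · rw [Subgroup.map_le_iff_le_comap]
    haveI : (Subgroup.comap (MonoidHom.inl A B)
        (Subgroup.normalClosure {((z, 1) : A × B)})).Normal := by
      constructor
      intro n hn g
      have h2 := Subgroup.normalClosure_normal.conj_mem _ hn ((g, 1) : A × B)
      simpa [MonoidHom.inl] using h2
    apply Subgroup.normalClosure_le_normal
    simp only [Set.singleton_subset_iff, SetLike.mem_coe, Subgroup.mem_comap]
    exact Subgroup.subset_normalClosure rfl

theorem prod_MP_iff (A B : Type*) [Group A] [Group B] [Finite A] [Finite B]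
    (hB : StrongMagnusProperty B) :
    MagnusProperty (A × B) ↔ MagnusProperty A := by
  constructor
  · intro h x y hxy
    have := h (x, 1) (y, 1) (by rw [nc_inl, nc_inl, hxy])
    rcases this with h' | h'
    · exact Or.inl (by simpa using (MonoidHom.fst A B).map_isConj h')
    · exact Or.inr (by simpa using (MonoidHom.fst A B).map_isConj h')
  · intro hA p q hpq
    obtain ⟨a, b⟩ := p
    obtain ⟨a', b'⟩ := q
    have hfst : Subgroup.normalClosure {a} = Subgroup.normalClosure {a'} := by
      have := congrArg (Subgroup.map (MonoidHom.fst A B)) hpq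
      rwa [Subgroup.map_normalClosure _ _ Prod.fst_surjective,
        Subgroup.map_normalClosure _ _ Prod.fst_surjective,
        Set.image_singleton, Set.image_singleton] at this
    have hsnd : Subgroup.normalClosure {b} = Subgroup.normalClosure {b'} := by
      have := congrArg (Subgroup.map (MonoidHom.snd A B)) hpq
      rwa [Subgroup.map_normalClosure _ _ Prod.snd_surjective,
        Subgroup.map_normalClosure _ _ Prod.snd_surjective,
        Set.image_singleton, Set.image_singleton] at this
    have hb : IsConj b b' := hB b b' hsnd
    rcases hA a a' hfst with ha | ha
    · exact Or.inl (isConj_prod ha hb)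
    · refine Or.inr ?_
      have hbinv : IsConj b b'⁻¹ := hb.trans (hB b' b'⁻¹ (nc_inv b').symm)
      simpa [Prod.inv_mk] using isConj_prod ha hbinv
end

section
/- Let A and B be finite groups. Then the direct product A × B has the Strong Magnus Property if and only if both A and B have the Strong Magnus Property. -/
private lemma ncl_inl {A B : Type*} [Group A] [Group B] (x : A) :
    Subgroup.normalClosure {((x, 1) : A × B)} =
      (Subgroup.normalClosure {x}).prod ⊥ := by
  apply le_antisymm
  · apply Subgroup.normalClosure_le_normal
    intro z hz
    rw [Set.mem_singleton_iff] at hz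
    subst hz
    exact ⟨Subgroup.subset_normalClosure rfl, Subgroup.mem_bot.2 rfl⟩
  · rintro ⟨a, b⟩ ⟨ha, hb⟩
    simp only [Subgroup.mem_bot] at hb
    subst hb
    have : a ∈ (Subgroup.normalClosure {((x, 1) : A × B)}).comap (MonoidHom.inl A B) := by
      have hn : ((Subgroup.normalClosure {((x, 1) : A × B)}).comap
          (MonoidHom.inl A B)).Normal :=
        Subgroup.Normal.comap inferInstance _
      refine Subgroup.normalClosure_le_normal (N := _) (s := {x}) ?_ ha
      intro z hz
      rw [Set.mem_singleton_iff] at hz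
      subst hz
      exact Subgroup.subset_normalClosure rfl
    exact this

private lemma ncl_inr {A B : Type*} [Group A] [Group B] (x : B) :
    Subgroup.normalClosure {((1, x) : A × B)} =
      (⊥ : Subgroup A).prod (Subgroup.normalClosure {x}) := by
  apply le_antisymm
  · apply Subgroup.normalClosure_le_normal
    intro z hz
    rw [Set.mem_singleton_iff] at hz
    subst hz
    exact ⟨Subgroup.mem_bot.2 rfl, Subgroup.subset_normalClosure rfl⟩
  · rintro ⟨a, b⟩ ⟨ha, hb⟩
    simp only [Subgroup.mem_bot] at ha
    subst ha
    have : b ∈ (Subgroup.normalClosure {((1, x) : A × B)}).comap (MonoidHom.inr A B) := by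
      have hn : ((Subgroup.normalClosure {((1, x) : A × B)}).comap
          (MonoidHom.inr A B)).Normal :=
        Subgroup.Normal.comap inferInstance _
      refine Subgroup.normalClosure_le_normal (N := _) (s := {x}) ?_ hb
      intro z hz
      rw [Set.mem_singleton_iff] at hz
      subst hz
      exact Subgroup.subset_normalClosure rfl
    exact this

theorem prod_SMP_iff (A B : Type*) [Group A] [Group B] [Finite A] [Finite B] :
    StrongMagnusProperty (A × B) ↔ StrongMagnusProperty A ∧ StrongMagnusProperty B := by
  constructor
  · intro h
    constructor
    · intro x y hxy
      have h2 : Subgroup.normalClosure {((x, 1) : A × B)} =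
          Subgroup.normalClosure {((y, 1) : A × B)} := by
        rw [ncl_inl, ncl_inl, hxy]
      obtain ⟨c, hc⟩ := isConj_iff.1 (h _ _ h2)
      exact isConj_iff.2 ⟨c.1, congrArg Prod.fst hc⟩
    · intro x y hxy
      have h2 : Subgroup.normalClosure {((1, x) : A × B)} =
          Subgroup.normalClosure {((1, y) : A × B)} := by
        rw [ncl_inr, ncl_inr, hxy]
      obtain ⟨c, hc⟩ := isConj_iff.1 (h _ _ h2)
      exact isConj_iff.2 ⟨c.2, congrArg Prod.snd hc⟩
  · rintro ⟨hA, hB⟩ ⟨a, b⟩ ⟨a', b'⟩ hcl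
    have hfst : Subgroup.normalClosure {a} = Subgroup.normalClosure {a'} := by
      have := congrArg (Subgroup.map (MonoidHom.fst A B)) hcl
      rwa [Subgroup.map_normalClosure _ _ Prod.fst_surjective,
        Subgroup.map_normalClosure _ _ Prod.fst_surjective,
        Set.image_singleton, Set.image_singleton] at this
    have hsnd : Subgroup.normalClosure {b} = Subgroup.normalClosure {b'} := by
      have := congrArg (Subgroup.map (MonoidHom.snd A B)) hcl
      rwa [Subgroup.map_normalClosure _ _ Prod.snd_surjective,
        Subgroup.map_normalClosure _ _ Prod.snd_surjective,
        Set.image_singleton, Set.image_singleton] at this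
    obtain ⟨c, hc⟩ := isConj_iff.1 (hA _ _ hfst)
    obtain ⟨d, hd⟩ := isConj_iff.1 (hB _ _ hsnd)
    exact isConj_iff.2 ⟨(c, d), Prod.ext hc hd⟩
end

section
/- Let n be a positive integer and for each i ∈ {1,…,n} let G_i be a finite group with a nontrivial normal subgroup N_i and a subgroup H_i such that H_i is a complement of N_i in G_i (i.e., N_i ∩ H_i = {1} and N_i H_i = G_i). Assume that: (1) for each i, the set N_i \ {1} is a single conjugacy class of G_i; (2) for each i and each nontrivial h ∈ H_i, the centralizer of h in N_i is trivial; and (3) the direct product H_1 × ⋯ × H_n has the Magnus Property. Then the direct product G_1 × ⋯ × G_n has the Magnus Property. -/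
section Aux

variable {G : Type*} [Group G] {N H : Subgroup G}

/-- Uniqueness of the decomposition `g = v * h`. -/
theorem MP_decomp_unique (hinf : N ⊓ H = ⊥) {v v' h h' : G}
    (hv : v ∈ N) (hv' : v' ∈ N) (hh : h ∈ H) (hh' : h' ∈ H)
    (e : v * h = v' * h') : v = v' ∧ h = h' := by
  have key : v'⁻¹ * v = h' * h⁻¹ := by
    calc v'⁻¹ * v = v'⁻¹ * (v * h) * h⁻¹ := by group
    _ = v'⁻¹ * (v' * h') * h⁻¹ := by rw [e]
    _ = h' * h⁻¹ := by group
  have hmem : v'⁻¹ * v ∈ N ⊓ H := by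
    refine Subgroup.mem_inf.2 ⟨mul_mem (inv_mem hv') hv, ?_⟩
    rw [key]; exact mul_mem hh' (inv_mem hh)
  rw [hinf, Subgroup.mem_bot] at hmem
  have hvv : v = v' := by
    have := hmem
    rw [inv_mul_eq_one] at this
    exact this.symm
  refine ⟨hvv, ?_⟩
  subst hvv
  exact mul_left_cancel e

variable (N H) in
/-- The `H`-part of an element, given the decomposition `G = N * H`. -/
noncomputable def MPhPartFun (hsup : ∀ g : G, ∃ v ∈ N, ∃ h ∈ H, g = v * h) (g : G) : H :=
  ⟨(hsup g).choose_spec.2.choose, (hsup g).choose_spec.2.choose_spec.1⟩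

theorem MPhPartFun_spec (hsup : ∀ g : G, ∃ v ∈ N, ∃ h ∈ H, g = v * h) (g : G) :
    ∃ v ∈ N, g = v * (MPhPartFun N H hsup g : G) :=
  ⟨(hsup g).choose, (hsup g).choose_spec.1, (hsup g).choose_spec.2.choose_spec.2⟩

theorem MPhPartFun_eq (hinf : N ⊓ H = ⊥) (hsup : ∀ g : G, ∃ v ∈ N, ∃ h ∈ H, g = v * h)
    {g v h : G} (hv : v ∈ N) (hh : h ∈ H) (e : g = v * h) :
    (MPhPartFun N H hsup g : G) = h := by
  obtain ⟨v', hv', e'⟩ := MPhPartFun_spec hsup g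
  exact (MP_decomp_unique hinf hv' hv (MPhPartFun N H hsup g).2 hh (e' ▸ e)).2

variable (N H) in
/-- The `H`-part map as a monoid hom, when `N` is normal. -/
noncomputable def MPhPart (hN : N.Normal) (hinf : N ⊓ H = ⊥)
    (hsup : ∀ g : G, ∃ v ∈ N, ∃ h ∈ H, g = v * h) : G →* H :=
  MonoidHom.mk' (MPhPartFun N H hsup) (by
    intro a b
    obtain ⟨va, hva, ea⟩ := MPhPartFun_spec hsup a
    obtain ⟨vb, hvb, eb⟩ := MPhPartFun_spec hsup b
    set ha := (MPhPartFun N H hsup a : G) with hha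
    set hb := (MPhPartFun N H hsup b : G) with hhb
    have hmem : va * (ha * vb * ha⁻¹) ∈ N :=
      mul_mem hva (hN.conj_mem vb hvb ha)
    have hmul : a * b = (va * (ha * vb * ha⁻¹)) * (ha * hb) := by
      rw [ea, eb]; group
    have := MPhPartFun_eq hinf hsup hmem
      (mul_mem (MPhPartFun N H hsup a).2 (MPhPartFun N H hsup b).2) hmul
    exact Subtype.ext this)

theorem MPhPart_coe (hN : N.Normal) (hinf : N ⊓ H = ⊥)
    (hsup : ∀ g : G, ∃ v ∈ N, ∃ h ∈ H, g = v * h) (h : H) :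
    MPhPart N H hN hinf hsup (h : G) = h := by
  apply Subtype.ext
  exact MPhPartFun_eq hinf hsup (one_mem N) h.2 (by rw [one_mul])

theorem MPhPart_eq_one_iff (hN : N.Normal) (hinf : N ⊓ H = ⊥)
    (hsup : ∀ g : G, ∃ v ∈ N, ∃ h ∈ H, g = v * h) (g : G) :
    MPhPart N H hN hinf hsup g = 1 ↔ g ∈ N := by
  constructor
  · intro h1
    obtain ⟨v, hv, e⟩ := MPhPartFun_spec hsup g
    have : (MPhPart N H hN hinf hsup g : G) = (MPhPartFun N H hsup g : G) := rfl
    rw [h1] at this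
    simp only [OneMemClass.coe_one] at this
    rw [e, ← this, mul_one]
    exact hv
  · intro hg
    apply Subtype.ext
    have : (MPhPart N H hN hinf hsup g : G) = (MPhPartFun N H hsup g : G) := rfl
    rw [this, MPhPartFun_eq hinf hsup hg (one_mem H) (by rw [mul_one])]
    rfl

/-- If the `H`-part of `g` is nontrivial, then `g` is conjugate to its `H`-part. -/
theorem MP_conj_to_hPart [Finite G] (hN : N.Normal) (hinf : N ⊓ H = ⊥)
    (hsup : ∀ g : G, ∃ v ∈ N, ∃ h ∈ H, g = v * h)
    (hcent : ∀ h ∈ H, h ≠ 1 → ∀ v ∈ N, v * h = h * v → v = 1)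
    (g : G) (hne : (MPhPart N H hN hinf hsup g : G) ≠ 1) :
    IsConj g (MPhPart N H hN hinf hsup g : G) := by
  set h := (MPhPart N H hN hinf hsup g : G) with hh
  have hhH : h ∈ H := (MPhPart N H hN hinf hsup g).2
  obtain ⟨v, hv, e⟩ := MPhPartFun_spec hsup g
  have e' : g = v * h := e
  -- the twisted commutator map on N is injective, hence surjective
  let θ : N → N := fun u => ⟨(u : G)⁻¹ * (h * u * h⁻¹),
    mul_mem (inv_mem u.2) (hN.conj_mem u u.2 h)⟩
  have hinj : Function.Injective θ := by
    intro u w huw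
    have h1 : (u : G)⁻¹ * (h * u * h⁻¹) = (w : G)⁻¹ * (h * w * h⁻¹) :=
      congrArg Subtype.val huw
    have h3 : (w : G) * (u : G)⁻¹ * h * u = h * w := by
      calc (w : G) * (u : G)⁻¹ * h * u
          = (w : G) * ((u : G)⁻¹ * (h * u * h⁻¹)) * h := by group
        _ = (w : G) * ((w : G)⁻¹ * (h * w * h⁻¹)) * h := by rw [h1]
        _ = h * w := by group
    have h2 : ((w : G) * (u : G)⁻¹) * h = h * ((w : G) * (u : G)⁻¹) := by
      calc ((w : G) * (u : G)⁻¹) * h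
          = ((w : G) * (u : G)⁻¹ * h * u) * (u : G)⁻¹ := by group
        _ = (h * w) * (u : G)⁻¹ := by rw [h3]
        _ = h * ((w : G) * (u : G)⁻¹) := by group
    have h4 : (w : G) * (u : G)⁻¹ = 1 :=
      hcent h hhH hne _ (mul_mem w.2 (inv_mem u.2)) h2
    have : (w : G) = (u : G) := by
      rw [mul_inv_eq_one] at h4; exact h4
    exact Subtype.ext this.symm
  have hsurj : Function.Surjective θ := Finite.surjective_of_injective hinj
  obtain ⟨u, hu⟩ := hsurj ⟨v, hv⟩
  have hu' : (u : G)⁻¹ * (h * u * h⁻¹) = v := congrArg Subtype.val hu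
  rw [isConj_iff]
  refine ⟨(u : G), ?_⟩
  rw [e', ← hu']
  group

/-- Normal closure of a conjugate. -/
theorem MP_ncl_conj (c y : G) :
    Subgroup.normalClosure {c * y * c⁻¹} = Subgroup.normalClosure ({y} : Set G) := by
  apply le_antisymm
  · apply Subgroup.normalClosure_le_normal
    simp only [Set.singleton_subset_iff, SetLike.mem_coe] -- reduce
    exact Subgroup.normalClosure_normal.conj_mem y
      (Subgroup.subset_normalClosure (Set.mem_singleton y)) c
  · apply Subgroup.normalClosure_le_normal
    simp only [Set.singleton_subset_iff, SetLike.mem_coe] -- reduce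
    have hm := Subgroup.normalClosure_normal.conj_mem (c * y * c⁻¹)
      (Subgroup.subset_normalClosure (Set.mem_singleton _)) c⁻¹
    have he : c⁻¹ * (c * y * c⁻¹) * c⁻¹⁻¹ = y := by group
    rwa [he] at hm

theorem MP_ncl_inv (y : G) :
    Subgroup.normalClosure ({y⁻¹} : Set G) = Subgroup.normalClosure ({y} : Set G) := by
  apply le_antisymm
  · apply Subgroup.normalClosure_le_normal
    simp only [Set.singleton_subset_iff, SetLike.mem_coe] -- reduce
    exact inv_mem (Subgroup.subset_normalClosure (Set.mem_singleton y))
  · apply Subgroup.normalClosure_le_normal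
    simp only [Set.singleton_subset_iff, SetLike.mem_coe] -- reduce
    have hm := inv_mem (Subgroup.subset_normalClosure (Set.mem_singleton y⁻¹))
    rwa [inv_inv] at hm

theorem MP_ncl_one : Subgroup.normalClosure ({1} : Set G) = ⊥ := by
  apply le_antisymm
  · exact Subgroup.normalClosure_le_normal (by simp)
  · exact bot_le

/-- The key per-factor lemma. -/
theorem MP_conj_of_hPart_eq [Finite G] (hN : N.Normal) (hinf : N ⊓ H = ⊥)
    (hsup : ∀ g : G, ∃ v ∈ N, ∃ h ∈ H, g = v * h)
    (hclass : ∀ x ∈ N, ∀ y ∈ N, x ≠ 1 → y ≠ 1 → IsConj x y)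
    (hcent : ∀ h ∈ H, h ≠ 1 → ∀ v ∈ N, v * h = h * v → v = 1)
    {x y : G}
    (hφ : MPhPart N H hN hinf hsup x = MPhPart N H hN hinf hsup y)
    (hncl : Subgroup.normalClosure ({x} : Set G) = Subgroup.normalClosure ({y} : Set G)) :
    IsConj x y := by
  by_cases h1 : MPhPart N H hN hinf hsup x = 1
  · -- both x and y lie in N
    have hx : x ∈ N := (MPhPart_eq_one_iff hN hinf hsup x).1 h1
    have hy : y ∈ N := (MPhPart_eq_one_iff hN hinf hsup y).1 (hφ ▸ h1)
    by_cases hx1 : x = 1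
    · subst hx1
      have : y ∈ Subgroup.normalClosure ({y} : Set G) :=
        Subgroup.subset_normalClosure (Set.mem_singleton y)
      rw [← hncl, MP_ncl_one, Subgroup.mem_bot] at this
      rw [this]
    · have hy1 : y ≠ 1 := by
        intro hy1
        subst hy1
        have : x ∈ Subgroup.normalClosure ({x} : Set G) :=
          Subgroup.subset_normalClosure (Set.mem_singleton x)
        rw [hncl, MP_ncl_one, Subgroup.mem_bot] at this
        exact hx1 this
      exact hclass x hx y hy hx1 hy1
  · have hne : (MPhPart N H hN hinf hsup x : G) ≠ 1 := by
      intro hc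
      exact h1 (Subtype.ext hc)
    have hne' : (MPhPart N H hN hinf hsup y : G) ≠ 1 := by rw [← hφ]; exact hne
    have c1 := MP_conj_to_hPart hN hinf hsup hcent x hne
    have c2 := MP_conj_to_hPart hN hinf hsup hcent y hne'
    rw [← hφ] at c2
    exact c1.trans c2.symm

end Aux

theorem pi_MP_of_frobenius_factors (n : ℕ) (hn : 0 < n)
    (G : Fin n → Type*) [∀ i, Group (G i)] [∀ i, Finite (G i)]
    (N H : ∀ i, Subgroup (G i))
    (hNnormal : ∀ i, (N i).Normal)
    (hNnontrivial : ∀ i, N i ≠ ⊥)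
    (hcompl_inf : ∀ i, N i ⊓ H i = ⊥)
    (hcompl_sup : ∀ i, ∀ g : G i, ∃ v ∈ N i, ∃ h ∈ H i, g = v * h)
    (hclass : ∀ i, ∀ x ∈ N i, ∀ y ∈ N i, x ≠ 1 → y ≠ 1 → IsConj x y)
    (hcent : ∀ i, ∀ h ∈ H i, h ≠ 1 → ∀ v ∈ N i, v * h = h * v → v = 1)
    (hMP : MagnusProperty (∀ i, ↥(H i))) :
    MagnusProperty (∀ i, G i) := by
  classical
  -- the componentwise H-part homs
  set φ : ∀ i, G i →* ↥(H i) :=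
    fun i => MPhPart (N i) (H i) (hNnormal i) (hcompl_inf i) (hcompl_sup i) with hφdef
  -- the product hom
  set Φ : (∀ i, G i) →* (∀ i, ↥(H i)) :=
    MonoidHom.mk' (fun g i => φ i (g i)) (by
      intro a b
      funext i
      simp [map_mul]) with hΦdef
  have hΦapp : ∀ (g : ∀ i, G i) (i : Fin n), Φ g i = φ i (g i) := fun _ _ => rfl
  have hΦsurj : Function.Surjective Φ := by
    intro t
    refine ⟨fun i => (t i : G i), ?_⟩
    funext i
    rw [hΦapp]
    exact MPhPart_coe (hNnormal i) (hcompl_inf i) (hcompl_sup i) (t i)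
  -- projections are surjective
  have hprojsurj : ∀ i, Function.Surjective (Pi.evalMonoidHom G i) := by
    intro i a
    exact ⟨Pi.mulSingle i a, by simp⟩
  -- the key lemma: equal normal closures plus conjugate Φ-images gives conjugacy
  have key : ∀ a b : ∀ i, G i,
      Subgroup.normalClosure ({a} : Set (∀ i, G i)) = Subgroup.normalClosure {b} →
      IsConj (Φ a) (Φ b) → IsConj a b := by
    intro a b hncl hconj
    obtain ⟨c, hc⟩ := isConj_iff.mp hconj
    -- lift the conjugator
    set cHat : ∀ i, G i := fun i => (c i : G i) with hcHatdef
    have hΦcHat : Φ cHat = c := by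
      funext i
      rw [hΦapp]
      exact MPhPart_coe (hNnormal i) (hcompl_inf i) (hcompl_sup i) (c i)
    set a' : ∀ i, G i := cHat * a * cHat⁻¹ with ha'def
    have hΦa' : Φ a' = Φ b := by
      rw [ha'def, map_mul, map_mul, map_inv, hΦcHat, hc]
    have hncl' : Subgroup.normalClosure ({a'} : Set (∀ i, G i)) =
        Subgroup.normalClosure {b} := by
      rw [ha'def, MP_ncl_conj, hncl]
    -- componentwise conjugacy
    have hcomp : ∀ i, IsConj (a' i) (b i) := by
      intro i
      have hφeq : φ i (a' i) = φ i (b i) := by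
        rw [← hΦapp, ← hΦapp, hΦa']
      have hncli : Subgroup.normalClosure ({a' i} : Set (G i)) =
          Subgroup.normalClosure {b i} := by
        have := congrArg (Subgroup.map (Pi.evalMonoidHom G i)) hncl'
        rwa [Subgroup.map_normalClosure _ _ (hprojsurj i),
          Subgroup.map_normalClosure _ _ (hprojsurj i),
          Set.image_singleton, Set.image_singleton] at this
      exact MP_conj_of_hPart_eq (hNnormal i) (hcompl_inf i) (hcompl_sup i)
        (hclass i) (hcent i) hφeq hncli
    have : IsConj a' b := by
      choose d hd using fun i => isConj_iff.mp (hcomp i)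
      rw [isConj_iff]
      refine ⟨d, ?_⟩
      funext i
      exact hd i
    have haa' : IsConj a a' := by
      rw [isConj_iff]
      exact ⟨cHat, rfl⟩
    exact haa'.trans this
  -- main argument
  intro x y hxy
  have hΦncl : Subgroup.normalClosure ({Φ x} : Set (∀ i, ↥(H i))) =
      Subgroup.normalClosure {Φ y} := by
    have := congrArg (Subgroup.map Φ) hxy
    rwa [Subgroup.map_normalClosure _ _ hΦsurj, Subgroup.map_normalClosure _ _ hΦsurj,
      Set.image_singleton, Set.image_singleton] at this
  rcases hMP (Φ x) (Φ y) hΦncl with hc | hc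
  · exact Or.inl (key x y hxy hc)
  · refine Or.inr (key x y⁻¹ ?_ ?_)
    · rw [MP_ncl_inv, hxy]
    · rw [map_inv]
      exact hc
end

section
/- Let a and b be nonnegative integers, and set m = 2^a and n = 3^b. Then |m − n| = 1 if and only if (a, b) is one of (1,0), (1,1), (2,1), (3,2). -/
/-!
Modulo 8 the powers of 3 are 1 and 3, so `3 ^ b + 1 = 2 ^ a` forces `a ≤ 2`.
If `3 ^ b = 2 ^ a + 1` with `a ≥ 2`, then `3 ^ b ≡ 1 (mod 4)` makes `b = 2c` even, and
`2 ^ a = (3 ^ c + 1) * (3 ^ c - 1)` shows that `3 ^ c + 1` is a power of two, which is the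
first case again.
-/

lemma three_pow_mod_eight (b : ℕ) : 3 ^ b % 8 = if Even b then 1 else 3 := by
  induction b with
  | zero => rfl
  | succ b ih =>
    rw [pow_succ]
    by_cases hb : Even b <;> simp only [hb, Nat.even_add_one, if_true, if_false, not_true,
      not_false_eq_true] at ih ⊢ <;> omega

lemma three_pow_add_one_eq_two_pow {a b : ℕ} (h : 3 ^ b + 1 = 2 ^ a) :
    (a, b) = (1, 0) ∨ (a, b) = (2, 1) := by
  have ha : a < 3 := by
    by_contra! ha
    have h8 : 2 ^ 3 ∣ 2 ^ a := pow_dvd_pow 2 ha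
    have hmod := three_pow_mod_eight b
    split_ifs at hmod <;> omega
  have hb : b < 2 := by
    refine (Nat.pow_lt_pow_iff_right (by norm_num : 1 < 3)).1 ?_
    calc 3 ^ b < 2 ^ a := by omega
      _ ≤ 2 ^ 2 := Nat.pow_le_pow_right (by norm_num) (by omega)
      _ < 3 ^ 2 := by norm_num
  interval_cases a <;> interval_cases b <;> simp_all

lemma two_pow_add_one_eq_three_pow {a b : ℕ} (h : 2 ^ a + 1 = 3 ^ b) :
    (a, b) = (1, 1) ∨ (a, b) = (3, 2) := by
  rcases lt_or_ge a 2 with ha | ha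
  · have hmod := three_pow_mod_eight b
    interval_cases a
    · split_ifs at hmod <;> omega
    · left
      have : 3 ^ b = 3 ^ 1 := by omega
      rw [Nat.pow_right_injective (by norm_num) this]
  have hb : Even b := by
    have h4 : 2 ^ 2 ∣ 2 ^ a := pow_dvd_pow 2 ha
    have hmod := three_pow_mod_eight b
    split_ifs at hmod with hb
    · exact hb
    · omega
  obtain ⟨c, rfl⟩ := hb
  have hdvd : 3 ^ c + 1 ∣ 2 ^ a := by
    refine Dvd.intro (3 ^ c - 1) ?_
    have hpos := Nat.one_le_pow c 3 (by norm_num)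
    rw [pow_add] at h
    zify [hpos] at h ⊢
    linarith
  obtain ⟨j, -, hj⟩ := (Nat.dvd_prime_pow Nat.prime_two).1 hdvd
  rcases three_pow_add_one_eq_two_pow hj with hc | hc <;> obtain ⟨-, rfl⟩ := Prod.mk.inj hc
  · simp at h
  · right
    have : 2 ^ a = 2 ^ 3 := by simpa using h
    rw [Nat.pow_right_injective (by norm_num) this]

theorem two_pow_three_pow_dist_one (a b : ℕ) :
    |(2 : ℤ) ^ a - 3 ^ b| = 1 ↔
      (a, b) = (1, 0) ∨ (a, b) = (1, 1) ∨ (a, b) = (2, 1) ∨ (a, b) = (3, 2) := by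
  constructor
  · intro h
    rcases (abs_eq zero_le_one).1 h with h | h
    · have hnat : 3 ^ b + 1 = 2 ^ a := by exact_mod_cast (by linarith : (3 : ℤ) ^ b + 1 = 2 ^ a)
      have := three_pow_add_one_eq_two_pow hnat
      tauto
    · have hnat : 2 ^ a + 1 = 3 ^ b := by exact_mod_cast (by linarith : (2 : ℤ) ^ a + 1 = 3 ^ b)
      have := two_pow_add_one_eq_three_pow hnat
      tauto
  · rintro (h | h | h | h) <;> obtain ⟨rfl, rfl⟩ := Prod.mk.inj h <;> norm_num
end

section
/- Let G be a finite solvable group, let N be a minimal normal subgroup of G contained in the Frattini subgroup Φ(G), let p be the prime dividing |N|, and let K be a normal subgroup of G containing N. Suppose that K centralizes every chief p-factor of G between N and K; that is, for all normal subgroups M₁ < M₂ of G with N ≤ M₁, M₂ ≤ K, such that M₂/M₁ is a chief factor of G of order a power of p, the commutator [K, M₂] is contained in M₁. Then K centralizes N, i.e., [K, N] = {1}. -/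
/-- `M₂/M₁` is a chief factor of `G`: both are normal, `M₁ < M₂`, and there is
no normal subgroup strictly between them. -/
def IsChiefFactor (G : Type*) [Group G] (M₁ M₂ : Subgroup G) : Prop :=
  M₁.Normal ∧ M₂.Normal ∧ M₁ < M₂ ∧
    ¬ ∃ M : Subgroup G, M.Normal ∧ M₁ < M ∧ M < M₂

/-!
`N` is an abelian `p`-group, and dividing out a maximal normal `p'`-subgroup of `G` changes
nothing, so we may assume `O_{p'}(G) = 1`. Climb a chief series from `N` to `K`: if `R < K` is a
chief factor and `R` centralizes `N`, then `K/R` is an `r`-group and `K = R Q` for a Sylow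
`r`-subgroup `Q` of `K`. For `r = p`, `Q` fixes a nontrivial element of `N`, which is then central
in `K`, and minimality of `N` gives `[K, N] = 1`. For `r ≠ p`, `O_{p'}(G) = 1` forces `R` to be a
`p`-group; as `Q` acts trivially on the `p`-chief factors between `N` and `R`, coprime action gives
`R ≤ N C_G(Q)`, and the Frattini argument yields `G = N_G(Q) Φ(G)`. So `Q` is normal, and being
an `r`-group it centralizes the `p`-group `N`.
-/

open Subgroup

section

variable {G : Type*} [Group G]

structure Subgroup.IsMinimalNormal (N : Subgroup G) : Prop where
  normal : N.Normal
  ne_bot : N ≠ ⊥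
  eq_bot_or_eq : ∀ M : Subgroup G, M.Normal → M ≤ N → M = ⊥ ∨ M = N

def CentralizesChiefPFactors (p : ℕ) (N K : Subgroup G) : Prop :=
  ∀ M₁ M₂ : Subgroup G, N ≤ M₁ → M₂ ≤ K → IsChiefFactor G M₁ M₂ →
    (∃ k : ℕ, M₁.relIndex M₂ = p ^ k) → ⁅K, M₂⁆ ≤ M₁

theorem CentralizesChiefPFactors.mono {p : ℕ} {N K M : Subgroup G}
    (h : CentralizesChiefPFactors p N K) (hMK : M ≤ K) : CentralizesChiefPFactors p N M :=
  fun M₁ M₂ hN hM₂ hc hk => (commutator_mono hMK le_rfl).trans (h M₁ M₂ hN (hM₂.trans hMK) hc hk)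

theorem IsChiefFactor.of_maximal {R L : Subgroup G} (hL : L.Normal)
    (hR : Maximal (fun M : Subgroup G => M.Normal ∧ M < L) R) : IsChiefFactor G R L :=
  ⟨hR.prop.1, hL, hR.prop.2, fun ⟨_, hM, hRM, hML⟩ => hRM.not_ge (hR.le_of_ge ⟨hM, hML⟩ hRM.le)⟩

theorem Subgroup.induction_on_chiefFactor [Finite G] {N : Subgroup G} (hN : N.Normal)
    {P : Subgroup G → Prop} (base : P N)
    (step : ∀ R L, N ≤ R → IsChiefFactor G R L → P R → P L) :
    ∀ L : Subgroup G, L.Normal → N ≤ L → P L := by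
  intro L
  induction L using WellFoundedLT.induction with
  | _ L ih =>
    intro hL hNL
    rcases hNL.eq_or_lt with rfl | hNL
    · exact base
    obtain ⟨R, hNR, hR⟩ :=
      Finite.exists_le_maximal (p := fun M : Subgroup G => M.Normal ∧ M < L) ⟨hN, hNL⟩
    exact step R L hNR (.of_maximal hL hR) (ih R hR.prop.2 hR.prop.1 hNR)

theorem Subgroup.eq_bot_of_commutator_eq_self [Group.IsSolvable G] {H : Subgroup G}
    (h : ⁅H, H⁆ = H) : H = ⊥ := by
  obtain ⟨n, hn⟩ := Group.IsSolvable.solvable (G := G)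
  have hle : ∀ k, H ≤ derivedSeries G k := by
    intro k
    induction k with
    | zero => exact le_top
    | succ k ih => exact h.symm.le.trans (commutator_mono ih ih)
  exact le_bot_iff.mp (hn ▸ hle n)

namespace Subgroup.IsMinimalNormal

variable {N : Subgroup G}

theorem commutator_self_eq_bot [Group.IsSolvable G] (hN : N.IsMinimalNormal) : ⁅N, N⁆ = ⊥ :=
  have := hN.normal
  (hN.eq_bot_or_eq _ inferInstance (commutator_le_right N N)).resolve_right
    fun h => hN.ne_bot (eq_bot_of_commutator_eq_self h)

theorem le_centralizer_self [Group.IsSolvable G] (hN : N.IsMinimalNormal) : N ≤ centralizer N :=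
  commutator_eq_bot_iff_le_centralizer.mp hN.commutator_self_eq_bot

theorem isPGroup [Finite G] [Group.IsSolvable G] {p : ℕ} [Fact p.Prime] (hN : N.IsMinimalNormal)
    (hp : p ∣ Nat.card N) : IsPGroup p N := by
  have := hN.normal
  obtain ⟨P⟩ := (inferInstance : Nonempty (Sylow p N))
  have hPn : (P : Subgroup N).Normal := ⟨fun x hx g => by
    have hcomm : (g : G) * x = x * g := hN.le_centralizer_self x.2 g g.2
    rwa [show g * x * g⁻¹ = x from Subtype.ext (by simp [hcomm])]⟩
  have := P.characteristic_of_normal hPn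
  rcases hN.eq_bot_or_eq _ inferInstance (map_subtype_le (P : Subgroup N)) with h | h
  · exact absurd ((map_eq_bot_iff_of_injective _ N.subtype_injective).mp h)
      (P.ne_bot_of_dvd_card hp)
  · exact h ▸ P.isPGroup'.map N.subtype

theorem le_centralizer_of_mem {H : Subgroup G} [H.Normal] (hN : N.IsMinimalNormal) {n : G}
    (hn : n ∈ N) (hn1 : n ≠ 1) (hnH : n ∈ centralizer H) : H ≤ centralizer N := by
  have := hN.normal
  rcases hN.eq_bot_or_eq (N ⊓ centralizer H) inferInstance inf_le_left with h | h
  · exact absurd (mem_bot.mp (h ▸ mem_inf.mpr ⟨hn, hnH⟩)) hn1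
  · exact le_centralizer_iff.mp (h ▸ inf_le_right)

end Subgroup.IsMinimalNormal

theorem IsChiefFactor.isMinimalNormal_map_mk {M K : Subgroup G} [M.Normal]
    (h : IsChiefFactor G M K) : (K.map (QuotientGroup.mk' M)).IsMinimalNormal := by
  obtain ⟨-, hK, hMK, hno⟩ := h
  have hπ := QuotientGroup.mk'_surjective M
  refine ⟨hK.map _ hπ, ?_, fun Y hY hYK => ?_⟩
  · rw [Ne, Subgroup.map_eq_bot_iff, QuotientGroup.ker_mk']
    exact hMK.not_ge
  have hMY : M ≤ Y.comap (QuotientGroup.mk' M) := by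
    simpa only [QuotientGroup.ker_mk'] using ker_le_comap (QuotientGroup.mk' M) Y
  have hYK' : Y.comap (QuotientGroup.mk' M) ≤ K := by
    have := comap_mono (f := QuotientGroup.mk' M) hYK
    rwa [comap_map_eq, QuotientGroup.ker_mk', sup_of_le_left hMK.le] at this
  rw [← map_comap_eq_self_of_surjective hπ Y]
  rcases hMY.eq_or_lt with hMY | hMY
  · left
    rw [← hMY, Subgroup.map_eq_bot_iff, QuotientGroup.ker_mk']
  rcases hYK'.eq_or_lt with hYK' | hYK'
  · right
    rw [hYK']
  exact (hno ⟨_, hY.comap _, hMY, hYK'⟩).elim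

theorem IsChiefFactor.exists_prime_sup_sylow_eq [Finite G] [Group.IsSolvable G]
    {M K : Subgroup G} (h : IsChiefFactor G M K) :
    ∃ r, r.Prime ∧ ∀ Q : Sylow r K, M ⊔ (Q : Subgroup K).map K.subtype = K := by
  have := h.1
  have hmin := h.isMinimalNormal_map_mk
  obtain ⟨r, hr, hrK⟩ := Nat.exists_prime_and_dvd (mt card_eq_one.mp hmin.ne_bot)
  have := Fact.mk hr
  obtain ⟨m, hm⟩ := IsPGroup.iff_card.mp (hmin.isPGroup hrK)
  have hMK : M.relIndex K = r ^ m := by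
    have := relIndex_ker K (QuotientGroup.mk' M)
    rwa [QuotientGroup.ker_mk', hm] at this
  refine ⟨r, hr, fun Q => le_antisymm (sup_le h.2.2.1.le (map_subtype_le _)) ?_⟩
  have hQK : ((Q : Subgroup K).map K.subtype).relIndex K = (Q : Subgroup K).index := by
    rw [relIndex, subgroupOf, comap_map_eq_self_of_injective K.subtype_injective]
  have hcop : (r ^ m).Coprime (Q : Subgroup K).index :=
    Nat.Coprime.pow_left m ((Nat.Prime.coprime_iff_not_dvd hr).mpr Q.not_dvd_index)
  refine relIndex_eq_one.mp (Nat.eq_one_of_dvd_coprimes hcop ?_ ?_)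
  · exact hMK ▸ relIndex_dvd_of_le_left K le_sup_left
  · exact hQK ▸ relIndex_dvd_of_le_left K le_sup_right

theorem IsPGroup.exists_ne_one_mem_centralizer [Finite G] {p : ℕ} [Fact p.Prime]
    {P N : Subgroup G} [N.Normal] (hP : IsPGroup p P) (hpN : p ∣ Nat.card N) :
    ∃ n ∈ N, n ≠ 1 ∧ n ∈ centralizer P := by
  let _ : MulAction P N := MulAction.compHom N ((MulAut.conjNormal (H := N)).comp P.subtype)
  obtain ⟨n, hn, hn1⟩ :=
    hP.exists_fixed_point_of_prime_dvd_card_of_fixed_point N hpN (a := 1)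
      fun x => map_one (MulAut.conjNormal (x : G))
  refine ⟨n, n.2, fun h => hn1 (Subtype.ext h.symm), fun x hx => ?_⟩
  have hconj : x * n * x⁻¹ = n := congrArg Subtype.val (hn ⟨x, hx⟩)
  exact mul_inv_eq_iff_eq_mul.mp hconj

/-- `Q` acts on the coset `g R` by conjugation; transported to `R` this is the action
`x • r = g⁻¹ x g r x⁻¹`, and a fixed point `r` of this coprime action makes `g r` centralize `Q`. -/
theorem IsPGroup.le_sup_centralizer_of_commutator_le [Finite G] {q : ℕ} [Fact q.Prime]
    {Q R L : Subgroup G} [hR : R.Normal] (hQ : IsPGroup q Q) (hqR : ¬ q ∣ Nat.card R)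
    (h : ⁅Q, L⁆ ≤ R) : L ≤ R ⊔ centralizer Q := by
  intro g hg
  have hconj : ∀ x ∈ Q, g⁻¹ * x * g * x⁻¹ ∈ R := fun x hx => by
    simpa [commutatorElement_def, mul_assoc] using
      hR.conj_mem _ (h (commutator_mem_commutator hx hg)) g⁻¹
  let _ : MulAction Q R :=
    { smul := fun x r => ⟨g⁻¹ * x * g * r * x⁻¹, by
        simpa [mul_assoc] using R.mul_mem (hconj x x.2) (hR.conj_mem r r.2 x)⟩
      one_smul := fun r => Subtype.ext (show g⁻¹ * ↑(1 : Q) * g * r * (↑(1 : Q))⁻¹ = r by simp)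
      mul_smul := fun x y r => Subtype.ext (show g⁻¹ * ↑(x * y) * g * r * (↑(x * y))⁻¹ =
          g⁻¹ * x * g * (g⁻¹ * y * g * r * (↑y)⁻¹) * (↑x)⁻¹ by push_cast; group) }
  obtain ⟨r, hr⟩ := hQ.nonempty_fixed_point_of_prime_not_dvd_card R hqR
  have hgr : g * r ∈ centralizer Q := fun x hx => by
    have hfix : g⁻¹ * x * g * r * x⁻¹ = r := congrArg Subtype.val (hr ⟨x, hx⟩)
    calc x * (g * r) = g * (g⁻¹ * x * g * r * x⁻¹) * x := by group
      _ = g * r * x := by rw [hfix, mul_assoc]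
  rw [← mul_inv_cancel_right g (r : G)]
  exact mul_mem (mem_sup_right hgr) (mem_sup_left (inv_mem r.2))

theorem CentralizesChiefPFactors.le_sup_centralizer [Finite G] {p q : ℕ} [hp : Fact p.Prime]
    [hq : Fact q.Prime] (hqp : q ≠ p) {N K B Q : Subgroup G} (hK : CentralizesChiefPFactors p N K)
    (hN : N.Normal) (hB : B.Normal) (hNB : N ≤ B) (hBK : B ≤ K) (hBp : IsPGroup p B)
    (hQK : Q ≤ K) (hQ : IsPGroup q Q) : B ≤ N ⊔ centralizer Q := by
  refine induction_on_chiefFactor hN (P := fun L => L ≤ B → L ≤ N ⊔ centralizer Q)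
    (fun _ => le_sup_left) ?_ B hB hNB le_rfl
  intro R L hNR hRL ih hLB
  have := hRL.1
  have hRB : R ≤ B := hRL.2.2.1.le.trans hLB
  have hKL : ⁅K, L⁆ ≤ R :=
    hK R L hNR (hLB.trans hBK) hRL ((hBp.to_le hLB).index (R.subgroupOf L))
  have hqR : ¬ q ∣ Nat.card R := by
    obtain ⟨k, hk⟩ := IsPGroup.iff_card.mp (hBp.to_le hRB)
    rw [hk, ← Nat.Prime.coprime_iff_not_dvd hq.out]
    exact Nat.Coprime.pow_right k ((Nat.coprime_primes hq.out hp.out).mpr hqp)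
  calc L ≤ R ⊔ centralizer Q :=
        hQ.le_sup_centralizer_of_commutator_le hqR ((commutator_mono hQK le_rfl).trans hKL)
    _ ≤ N ⊔ centralizer Q := sup_le (ih hRB) le_sup_right

theorem Sylow.normal_map_subtype_of_le_normalizer [Finite G] {s : ℕ} [Fact s.Prime]
    {L : Subgroup G} [L.Normal] (S : Sylow s L)
    (h : L ≤ normalizer ((S : Subgroup L).map L.subtype)) :
    ((S : Subgroup L).map L.subtype).Normal := by
  have hS := (normal_subgroupOf_iff_le_normalizer (map_subtype_le _)).mpr h
  rw [subgroupOf, comap_map_eq_self_of_injective L.subtype_injective] at hS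
  have := S.characteristic_of_normal hS
  infer_instance

theorem Sylow.normal_of_le_normalizer_sup_frattini [Finite G] {r : ℕ} [Fact r.Prime]
    {K : Subgroup G} [K.Normal] (Q : Sylow r K)
    (h : K ≤ normalizer ((Q : Subgroup K).map K.subtype) ⊔ frattini G) :
    ((Q : Subgroup K).map K.subtype).Normal :=
  normalizer_eq_top_iff.mp <| frattini_nongenerating <| top_le_iff.mp <|
    Sylow.normalizer_sup_eq_top Q ▸ sup_le le_sup_left h

theorem CentralizesChiefPFactors.isPGroup_of_le_centralizer [Finite G] [Group.IsSolvable G]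
    {p : ℕ} [hp : Fact p.Prime] (hO : ∀ Z : Subgroup G, Z.Normal → (Nat.card Z).Coprime p → Z = ⊥)
    {N K M : Subgroup G} (hK : CentralizesChiefPFactors p N K) (hN : N.Normal)
    (hNp : IsPGroup p N) (hM : M.Normal) (hNM : N ≤ M) (hMK : M ≤ K) (hMN : M ≤ centralizer N) :
    IsPGroup p M := by
  obtain ⟨P, hNP, hP⟩ := Finite.exists_le_maximal
    (p := fun P : Subgroup G => P.Normal ∧ IsPGroup p P ∧ P ≤ M) ⟨hN, hNp, hNM⟩
  obtain ⟨hPn, hPp, hPM⟩ := hP.prop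
  -- A chief factor `L/P` inside `M` is an `s`-group. For `s ≠ p` a Sylow `s`-subgroup of `L`
  -- centralizes `P`, so it is normal in `L`, hence a normal `p'`-subgroup of `G`, hence trivial.
  suffices M ≤ P from hPp.to_le this
  refine induction_on_chiefFactor hPn (P := fun L => L ≤ M → L ≤ P) (fun _ => le_rfl) ?_
    M hM hPM le_rfl
  intro R L hPR hRL ih hLM
  obtain rfl : R = P := le_antisymm (ih (hRL.2.2.1.le.trans hLM)) hPR
  have := hRL.2.1
  obtain ⟨s, hs, hcover⟩ := hRL.exists_prime_sup_sylow_eq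
  have := Fact.mk hs
  obtain ⟨S⟩ := (inferInstance : Nonempty (Sylow s L))
  have hSL : (S : Subgroup L).map L.subtype ≤ L := map_subtype_le _
  have hSs : IsPGroup s ((S : Subgroup L).map L.subtype) := S.isPGroup'.map _
  rw [← hcover S]
  rcases eq_or_ne s p with rfl | hsp
  · have := hPn
    exact hP.le_of_ge ⟨by rw [hcover S]; infer_instance, hPp.to_sup_of_normal_left hSs,
      (hcover S).le.trans hLM⟩ le_sup_left
  have hPS : R ≤ centralizer ((S : Subgroup L).map L.subtype) :=
    (hK.le_sup_centralizer hsp hN hPn hNP (hPM.trans hMK) hPp (hSL.trans (hLM.trans hMK)) hSs).trans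
      (sup_le (le_centralizer_iff.mp (hSL.trans (hLM.trans hMN))) le_rfl)
  have hSn := S.normal_map_subtype_of_le_normalizer
    ((hcover S).ge.trans (sup_le (hPS.trans (centralizer_le_normalizer _)) le_normalizer))
  obtain ⟨k, hk⟩ := IsPGroup.iff_card.mp hSs
  rw [hO _ hSn (hk ▸ Nat.Coprime.pow_left k ((Nat.coprime_primes hs hp.out).mpr hsp)), sup_bot_eq]

theorem CentralizesChiefPFactors.sylow_le_centralizer_of_ne [Finite G] [Group.IsSolvable G]
    {p r : ℕ} [Fact p.Prime] [Fact r.Prime] (hrp : r ≠ p)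
    (hO : ∀ Z : Subgroup G, Z.Normal → (Nat.card Z).Coprime p → Z = ⊥)
    {N K R : Subgroup G} [K.Normal] (hKc : CentralizesChiefPFactors p N K) (hN : N.Normal)
    (hNp : IsPGroup p N) (hNΦ : N ≤ frattini G) (hR : R.Normal) (hNR : N ≤ R)
    (hRN : R ≤ centralizer N) (Q : Sylow r K) (hcover : R ⊔ (Q : Subgroup K).map K.subtype = K) :
    (Q : Subgroup K).map K.subtype ≤ centralizer N := by
  have hQK : (Q : Subgroup K).map K.subtype ≤ K := map_subtype_le _
  have hQr : IsPGroup r ((Q : Subgroup K).map K.subtype) := Q.isPGroup'.map _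
  have hRK : R ≤ K := hcover ▸ le_sup_left
  have hRp := hKc.isPGroup_of_le_centralizer hO hN hNp hR hNR hRK hRN
  have hRQ := hKc.le_sup_centralizer hrp hN hR hNR hRK hRp hQK hQr
  have hQn := Q.normal_of_le_normalizer_sup_frattini <| hcover.ge.trans <| sup_le
    (hRQ.trans (sup_le (hNΦ.trans le_sup_right) ((centralizer_le_normalizer _).trans le_sup_left)))
    (le_normalizer.trans le_sup_left)
  have := hN
  exact commutator_eq_bot_iff_le_centralizer.mp
    (commutator_eq_bot_of_disjoint (IsPGroup.disjoint_of_ne r p hrp _ _ hQr hNp))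

theorem Subgroup.IsMinimalNormal.le_centralizer_of_centralizesChiefPFactors [Finite G]
    [Group.IsSolvable G] {p : ℕ} [Fact p.Prime]
    (hO : ∀ Z : Subgroup G, Z.Normal → (Nat.card Z).Coprime p → Z = ⊥)
    {N K : Subgroup G} (hN : N.IsMinimalNormal) (hNp : IsPGroup p N) (hNΦ : N ≤ frattini G)
    (hK : K.Normal) (hNK : N ≤ K) (hKc : CentralizesChiefPFactors p N K) :
    K ≤ centralizer N := by
  have := hN.normal
  refine induction_on_chiefFactor hN.normal
    (P := fun K => CentralizesChiefPFactors p N K → K ≤ centralizer N)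
    (fun _ => hN.le_centralizer_self) ?_ K hK hNK hKc
  intro R K hNR hRK ih hKc
  have hRN := ih (hKc.mono hRK.2.2.1.le)
  have := hRK.2.1
  obtain ⟨r, hr, hcover⟩ := hRK.exists_prime_sup_sylow_eq
  have := Fact.mk hr
  obtain ⟨Q⟩ := (inferInstance : Nonempty (Sylow r K))
  rw [← hcover Q]
  refine sup_le hRN ?_
  rcases eq_or_ne r p with rfl | hrp
  · have hpN : r ∣ Nat.card N := by
      obtain ⟨k, hk0, hk⟩ := hNp.nontrivial_iff_card.mp ((nontrivial_iff_ne_bot N).mpr hN.ne_bot)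
      exact hk ▸ dvd_pow_self r hk0.ne'
    obtain ⟨n, hnN, hn1, hnQ⟩ := (Q.isPGroup'.map K.subtype).exists_ne_one_mem_centralizer hpN
    have hnK : zpowers n ≤ centralizer K := le_centralizer_iff.mpr <| (hcover Q).ge.trans <|
      sup_le (le_centralizer_iff.mp (zpowers_le.mpr (le_centralizer_iff.mp hRN hnN)))
        (le_centralizer_iff.mp (zpowers_le.mpr hnQ))
    exact (map_subtype_le _).trans (hN.le_centralizer_of_mem hnN hn1 (hnK (mem_zpowers n)))
  · exact hKc.sylow_le_centralizer_of_ne hrp hO hN.normal hNp hNΦ hRK.1 hNR hRN Q (hcover Q)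

section Quotient

variable {H : Type*} [Group H] {f : G →* H}

theorem Subgroup.IsMinimalNormal.map {N : Subgroup G} (hN : N.IsMinimalNormal)
    (hf : Function.Surjective f) (hNf : Disjoint N f.ker) : (N.map f).IsMinimalNormal := by
  refine ⟨hN.normal.map f hf, ?_, fun Y hY hYN => ?_⟩
  · rw [Ne, Subgroup.map_eq_bot_iff]
    exact fun h => hN.ne_bot (hNf.eq_bot_of_le h)
  have hYeq : (Y.comap f ⊓ N).map f = Y := by
    refine le_antisymm (map_le_iff_le_comap.mpr inf_le_left) fun y hy => ?_
    obtain ⟨n, hn, rfl⟩ := hYN hy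
    exact mem_map_of_mem f ⟨hy, hn⟩
  have := hN.normal
  have := hY.comap f
  rcases hN.eq_bot_or_eq (Y.comap f ⊓ N) inferInstance inf_le_right with h | h
  · left
    rw [← hYeq, h, map_bot]
  · right
    rw [← hYeq, h]

theorem Subgroup.map_comap_inf_of_le_map {K : Subgroup G} {M : Subgroup H} (hM : M ≤ K.map f) :
    (M.comap f ⊓ K).map f = M := by
  refine le_antisymm (map_le_iff_le_comap.mpr inf_le_left) fun y hy => ?_
  obtain ⟨k, hk, rfl⟩ := hM hy
  exact mem_map_of_mem f ⟨hy, hk⟩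

theorem IsChiefFactor.comap_inf (hf : Function.Surjective f) {K : Subgroup G} (hK : K.Normal)
    {M₁ M₂ : Subgroup H} (hM₂K : M₂ ≤ K.map f) (h : IsChiefFactor H M₁ M₂) :
    IsChiefFactor G (M₁.comap f ⊓ K) (M₂.comap f ⊓ K) := by
  obtain ⟨hM₁, hM₂, hlt, hno⟩ := h
  have hC₁ := map_comap_inf_of_le_map (hlt.le.trans hM₂K)
  have hC₂ := map_comap_inf_of_le_map hM₂K
  have := hK
  have := hM₁.comap f
  have := hM₂.comap f
  refine ⟨inferInstance, inferInstance,
    lt_of_le_of_ne (inf_le_inf_right K (comap_mono hlt.le)) fun h => hlt.ne ?_, ?_⟩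
  · rw [← hC₁, ← hC₂, h]
  rintro ⟨W, hW, h₁, h₂⟩
  have hWK : W ≤ K := h₂.le.trans inf_le_right
  rcases (hC₁ ▸ map_mono h₁.le : M₁ ≤ W.map f).eq_or_lt with e₁ | e₁
  · exact h₁.not_ge (le_inf (map_le_iff_le_comap.mp e₁.ge) hWK)
  rcases (hC₂ ▸ map_mono h₂.le : W.map f ≤ M₂).eq_or_lt with e₂ | e₂
  · refine h₂.not_ge fun c hc => ?_
    obtain ⟨w, hw, hwc⟩ := (e₂ ▸ hc.1 : f c ∈ W.map f)
    have hwc' : w⁻¹ * c ∈ M₁.comap f ⊓ K :=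
      mem_inf.mpr ⟨by simp [hwc, one_mem], mul_mem (inv_mem (hWK hw)) hc.2⟩
    simpa using W.mul_mem hw (h₁.le hwc')
  · exact hno ⟨_, hW.map f hf, e₁, e₂⟩

theorem CentralizesChiefPFactors.map {p : ℕ} {N K : Subgroup G}
    (h : CentralizesChiefPFactors p N K) (hK : K.Normal) (hNK : N ≤ K)
    (hf : Function.Surjective f) : CentralizesChiefPFactors p (N.map f) (K.map f) := by
  intro M₁ M₂ hNM₁ hM₂K hc hk
  have hC₁ := map_comap_inf_of_le_map (hc.2.2.1.le.trans hM₂K)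
  have hC₂ := map_comap_inf_of_le_map hM₂K
  have hrel : (M₁.comap f ⊓ K).relIndex (M₂.comap f ⊓ K) = M₁.relIndex M₂ := by
    rw [← inf_relIndex_right, inf_assoc, inf_of_le_right inf_le_right, inf_relIndex_right,
      relIndex_comap, hC₂]
  have hcomm := h _ _ (le_inf (map_le_iff_le_comap.mp hNM₁) hNK) inf_le_right
    (hc.comap_inf hf hK hM₂K) (hrel ▸ hk)
  calc ⁅K.map f, M₂⁆ = ⁅K, M₂.comap f ⊓ K⁆.map f := by rw [map_commutator, hC₂]
    _ ≤ (M₁.comap f ⊓ K).map f := map_mono hcomm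
    _ = M₁ := hC₁

end Quotient

theorem QuotientGroup.forall_coprime_normal_eq_bot_of_maximal [Finite G] {p : ℕ}
    {Z : Subgroup G} [Z.Normal]
    (hZ : Maximal (fun Z : Subgroup G => Z.Normal ∧ (Nat.card Z).Coprime p) Z) :
    ∀ Y : Subgroup (G ⧸ Z), Y.Normal → (Nat.card Y).Coprime p → Y = ⊥ := by
  intro Y hY hYp
  have hcard : Nat.card (Y.comap (mk' Z)) = Nat.card Z * Nat.card Y := card_preimage_mk Z Y
  have hZY : Z ≤ Y.comap (mk' Z) := by simpa using ker_le_comap (mk' Z) Y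
  rw [← map_comap_eq_self_of_surjective (mk'_surjective Z) Y, Subgroup.map_eq_bot_iff, ker_mk']
  exact hZ.le_of_ge ⟨hY.comap _, hcard ▸ hZ.prop.2.mul_left hYp⟩ hZY

end

theorem frattini_chief_centralize (G : Type*) [Group G] [Finite G] [Group.IsSolvable G]
    (N : Subgroup G) (hNnormal : N.Normal) (hNne : N ≠ ⊥)
    (hNmin : ∀ M : Subgroup G, M.Normal → M ≤ N → M = ⊥ ∨ M = N)
    (hNfrattini : N ≤ frattini G)
    (p : ℕ) (hp : p.Prime) (hpN : p ∣ Nat.card N)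
    (K : Subgroup G) (hKnormal : K.Normal) (hNK : N ≤ K)
    (hcent : ∀ M₁ M₂ : Subgroup G, N ≤ M₁ → M₂ ≤ K → IsChiefFactor G M₁ M₂ →
      (∃ k : ℕ, M₁.relIndex M₂ = p ^ k) → ⁅K, M₂⁆ ≤ M₁) :
    ⁅K, N⁆ = ⊥ := by
  have := Fact.mk hp
  have hN : N.IsMinimalNormal := ⟨hNnormal, hNne, hNmin⟩
  have hNp := hN.isPGroup hpN
  obtain ⟨Z, -, hZ⟩ := Finite.exists_le_maximal
    (p := fun Z : Subgroup G => Z.Normal ∧ (Nat.card Z).Coprime p) ⟨normal_bot, by simp⟩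
  have := hZ.prop.1
  have hπ := QuotientGroup.mk'_surjective Z
  have hNZ : Disjoint N (QuotientGroup.mk' Z).ker := by
    obtain ⟨k, hk⟩ := IsPGroup.iff_card.mp hNp
    rw [QuotientGroup.ker_mk']
    exact disjoint_of_coprime_natCard (hk ▸ hZ.prop.2.symm.pow_left k)
  have hNΦ : N.map (QuotientGroup.mk' Z) ≤ frattini (G ⧸ Z) :=
    map_le_iff_le_comap.mpr (hNfrattini.trans (frattini_le_comap_frattini_of_surjective hπ))
  have hKN := (hN.map hπ hNZ).le_centralizer_of_centralizesChiefPFactors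
    (QuotientGroup.forall_coprime_normal_eq_bot_of_maximal hZ) (hNp.map _) hNΦ
    (hKnormal.map _ hπ) (map_mono hNK) (CentralizesChiefPFactors.map hcent hKnormal hNK hπ)
  rw [← commutator_eq_bot_iff_le_centralizer, ← map_commutator, Subgroup.map_eq_bot_iff] at hKN
  exact (hNZ.mono_left (commutator_le_right K N)).eq_bot_of_le hKN
end

section
/- Let G be a finite solvable group, p a prime, and M a maximal subgroup of G of index p^s for some positive integer s. Then G has a chief factor of order p^s; consequently, for every prime p dividing |G|, S_p(G) ≤ r_p(G), where S_p(G) is the largest s such that G has a maximal subgroup of index p^s and r_p(G) is the largest k such that G has a chief factor of order p^k. -/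
open Subgroup

section

variable {G : Type*} [Group G]

theorem exists_isChiefFactor_of_ne_top [Finite G] {K : Subgroup G} [hK : K.Normal]
    (hKtop : K ≠ ⊤) : ∃ N, IsChiefFactor G K N := by
  obtain ⟨N, ⟨hN, hKN⟩, hmin⟩ := (wellFounded_lt (α := Subgroup G)).has_min
    {N | N.Normal ∧ K < N} ⟨⊤, inferInstance, hKtop.lt_top⟩
  exact ⟨N, hK, hN, hKN, fun ⟨L, hL, hKL, hLN⟩ => hmin L ⟨hL, hKL⟩ hLN⟩

theorem commutator_sup_lt_of_lt [Group.IsSolvable G] {K N : Subgroup G} [K.Normal] [N.Normal]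
    (hKN : K < N) : ⁅N, N⁆ ⊔ K < N := by
  set f := QuotientGroup.mk' K
  have hsurj : Function.Surjective f := QuotientGroup.mk'_surjective K
  have hmap : N.map f ≠ ⊥ := by
    rw [Ne, Subgroup.map_eq_bot_iff, QuotientGroup.ker_mk']
    exact hKN.not_ge
  refine lt_of_le_of_ne (sup_le (commutator_le_left N N) hKN.le) fun heq => ?_
  apply (Group.IsSolvable.commutator_lt_of_ne_bot hmap).ne
  rw [← QuotientGroup.ker_mk' K, ← comap_map_eq] at heq
  rw [← map_commutator]
  conv_rhs => rw [← heq, map_comap_eq_self_of_surjective hsurj]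

theorem IsChiefFactor.commutator_le [Group.IsSolvable G] {K N : Subgroup G}
    (h : IsChiefFactor G K N) : ⁅N, N⁆ ≤ K := by
  obtain ⟨hK, hN, hKN, hno⟩ := h
  have hlt : ⁅N, N⁆ ⊔ K < N := commutator_sup_lt_of_lt hKN
  have heq : ⁅N, N⁆ ⊔ K = K := by
    by_contra hne
    exact hno ⟨_, inferInstance, lt_of_le_of_ne le_sup_right (Ne.symm hne), hlt⟩
  exact heq ▸ le_sup_left

theorem inf_normal_of_commutator_le {N M : Subgroup G} [hN : N.Normal] (hNM : N ⊔ M = ⊤)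
    (hcomm : ⁅N, N⁆ ≤ M) : (N ⊓ M).Normal := by
  have hNnorm : N ≤ normalizer ((N ⊓ M : Subgroup G) : Set G) := by
    rw [le_normalizer_iff_commutator_le_right]
    exact (commutator_mono le_rfl inf_le_left).trans (le_inf (commutator_le_left N N) hcomm)
  have hMnorm : M ≤ normalizer ((N ⊓ M : Subgroup G) : Set G) := by
    rw [le_normalizer_iff]
    exact fun m hm x hx => ⟨hN.conj_mem x hx.1 m, M.mul_mem (M.mul_mem hm hx.2) (M.inv_mem hm)⟩
  exact normalizer_eq_top_iff.mp (top_unique (hNM ▸ sup_le hNnorm hMnorm))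

theorem relIndex_inf_eq_index_of_sup_eq_top {N M : Subgroup G} [N.Normal] [N.FiniteIndex]
    (hNM : N ⊔ M = ⊤) : (N ⊓ M).relIndex N = M.index := by
  have hN : N.relIndex M = N.index := by
    rw [← relIndex_sup_right, sup_comm, hNM, relIndex_top_right]
  have h : (N ⊓ M).relIndex N * N.index = N.index * M.index := by
    rw [relIndex_mul_index inf_le_left, ← relIndex_mul_index inf_le_right, inf_relIndex_right, hN]
  rw [mul_comm N.index] at h
  exact Nat.eq_of_mul_eq_mul_right (Nat.pos_of_ne_zero FiniteIndex.index_ne_zero) h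

theorem IsCoatom.exists_isChiefFactor_relIndex_eq_index [Finite G] [Group.IsSolvable G]
    {M : Subgroup G} (hM : IsCoatom M) :
    ∃ M₁ M₂ : Subgroup G, IsChiefFactor G M₁ M₂ ∧ M₁.relIndex M₂ = M.index := by
  obtain ⟨N, hchief⟩ :=
    exists_isChiefFactor_of_ne_top (ne_top_of_le_ne_top hM.1 M.normalCore_le)
  obtain ⟨-, hN, hKN, -⟩ := id hchief
  have hNM : ¬ N ≤ M := fun h => hKN.not_ge (normal_le_normalCore.mpr h)
  have hsup : N ⊔ M = ⊤ :=
    hM.2 _ (lt_of_le_of_ne le_sup_right fun h => hNM (h ▸ le_sup_left))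
  have hinf : N ⊓ M = M.normalCore := by
    have : (N ⊓ M).Normal :=
      inf_normal_of_commutator_le hsup (hchief.commutator_le.trans M.normalCore_le)
    exact le_antisymm (normal_le_normalCore.mpr inf_le_right) (le_inf hKN.le M.normalCore_le)
  exact ⟨_, N, hchief, hinf ▸ relIndex_inf_eq_index_of_sup_eq_top hsup⟩

theorem sSup_coatom_index_pow_le_sSup_chiefFactor_pow [Finite G] [Group.IsSolvable G]
    {q : ℕ} (hq : 1 < q) :
    sSup {t : ℕ | ∃ M' : Subgroup G, IsCoatom M' ∧ M'.index = q ^ t} ≤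
      sSup {k : ℕ | ∃ M₁ M₂ : Subgroup G, IsChiefFactor G M₁ M₂ ∧ M₁.relIndex M₂ = q ^ k} := by
  refine csSup_le_csSup' ⟨Nat.card G, ?_⟩ ?_
  · rintro k ⟨M₁, M₂, -, hrel⟩
    calc k ≤ q ^ k := (Nat.lt_pow_self hq).le
      _ = M₁.relIndex M₂ := hrel.symm
      _ ≤ Nat.card M₂ := Nat.le_of_dvd Nat.card_pos (relIndex_dvd_card M₁ M₂)
      _ ≤ Nat.card G := card_le_card_group M₂
  · rintro t ⟨M', hM', hidx⟩
    rw [Set.mem_ofPred_eq, ← hidx]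
    exact hM'.exists_isChiefFactor_relIndex_eq_index

end

theorem chief_factor_of_maximal_index_general (G : Type*) [Group G] [Finite G] [Group.IsSolvable G]
    (p : ℕ) (M : Subgroup G) (hM : IsCoatom M)
    (s : ℕ) (hidx : M.index = p ^ s) :
    (∃ M₁ M₂ : Subgroup G, IsChiefFactor G M₁ M₂ ∧ M₁.relIndex M₂ = p ^ s) ∧
      ∀ q : ℕ, q.Prime → q ∣ Nat.card G →
        sSup {t : ℕ | ∃ M' : Subgroup G, IsCoatom M' ∧ M'.index = q ^ t} ≤
          sSup {k : ℕ | ∃ M₁ M₂ : Subgroup G, IsChiefFactor G M₁ M₂ ∧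
            M₁.relIndex M₂ = q ^ k} :=
  ⟨hidx ▸ hM.exists_isChiefFactor_relIndex_eq_index,
    fun _ hq _ => sSup_coatom_index_pow_le_sSup_chiefFactor_pow hq.one_lt⟩

theorem chief_factor_of_maximal_index (G : Type*) [Group G] [Finite G] [Group.IsSolvable G]
    (p : ℕ) (hp : p.Prime) (M : Subgroup G) (hM : IsCoatom M)
    (s : ℕ) (hs : 0 < s) (hidx : M.index = p ^ s) :
    (∃ M₁ M₂ : Subgroup G, IsChiefFactor G M₁ M₂ ∧ M₁.relIndex M₂ = p ^ s) ∧
      ∀ q : ℕ, q.Prime → q ∣ Nat.card G →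
        sSup {t : ℕ | ∃ M' : Subgroup G, IsCoatom M' ∧ M'.index = q ^ t} ≤
          sSup {k : ℕ | ∃ M₁ M₂ : Subgroup G, IsChiefFactor G M₁ M₂ ∧
            M₁.relIndex M₂ = q ^ k} :=
  chief_factor_of_maximal_index_general G p M hM s hidx
end

section
/- If G is a nontrivial finite group with the Magnus Property, then there exists a finite family N₁, …, N_k of normal subgroups of G such that for each i the quotient G/N_i is a primitive group with the Magnus Property, and the intersection N₁ ∩ ⋯ ∩ N_k equals the Frattini subgroup Φ(G) (so that G/Φ(G) is a subdirect product of finite primitive MP groups). -/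
open Subgroup

section Aux

variable {G : Type*} [Group G]

/-- If two elements have the same image in a quotient, the sups of their
normal closures with the kernel agree. -/
lemma ncl_sup_eq_of_mk_eq (N : Subgroup G) [N.Normal] {z w : G}
    (h : QuotientGroup.mk' N z = QuotientGroup.mk' N w) :
    normalClosure {z} ⊔ N = normalClosure {w} ⊔ N := by
  have hs : Function.Surjective (QuotientGroup.mk' N) := QuotientGroup.mk'_surjective N
  have hmap : (normalClosure {z}).map (QuotientGroup.mk' N)
      = (normalClosure {w}).map (QuotientGroup.mk' N) := by
    rw [map_normalClosure _ _ hs, map_normalClosure _ _ hs, Set.image_singleton,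
      Set.image_singleton, h]
  have := congrArg (comap (QuotientGroup.mk' N)) hmap
  rwa [comap_map_eq, comap_map_eq, QuotientGroup.ker_mk'] at this

/-- The Magnus property passes to quotients of finite groups. -/
lemma MagnusProperty.quotient [Finite G] (hG : MagnusProperty G)
    (N : Subgroup G) [N.Normal] : MagnusProperty (G ⧸ N) := by
  haveI : Finite (Subgroup G) :=
    Finite.of_injective (fun H => (H : Set G)) SetLike.coe_injective
  intro xb yb h
  obtain ⟨x, rfl⟩ := QuotientGroup.mk'_surjective N xb
  obtain ⟨y, rfl⟩ := QuotientGroup.mk'_surjective N yb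
  set π := QuotientGroup.mk' N with hπ
  have key : normalClosure {x} ⊔ N = normalClosure {y} ⊔ N := by
    have hs : Function.Surjective π := QuotientGroup.mk'_surjective N
    have hmap : (normalClosure {x}).map π = (normalClosure {y}).map π := by
      rw [map_normalClosure _ _ hs, map_normalClosure _ _ hs, Set.image_singleton,
        Set.image_singleton, h]
    have := congrArg (comap π) hmap
    rwa [comap_map_eq, comap_map_eq, QuotientGroup.ker_mk'] at this
  set S : Set (Subgroup G) := {H | ∃ z : G, π z = π x ∧ H = normalClosure {z}} with hS
  have hSne : (normalClosure {x} : Subgroup G) ∈ S := ⟨x, rfl, rfl⟩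
  obtain ⟨H, ⟨x', hx', rfl⟩, hmin⟩ :=
    (Finite.to_wellFoundedLT (α := Subgroup G)).wf.has_min S ⟨_, hSne⟩
  have hx'sup : normalClosure {x'} ⊔ N = normalClosure {y} ⊔ N :=
    (ncl_sup_eq_of_mk_eq N hx').trans key
  have hy_mem : y ∈ normalClosure {x'} ⊔ N := by
    rw [hx'sup]
    exact mem_sup_left (subset_normalClosure rfl)
  rw [← SetLike.mem_coe, mul_normal] at hy_mem
  obtain ⟨y', hy'H, n, hn, hyeq⟩ := hy_mem
  have hn1 : π n = 1 := (QuotientGroup.eq_one_iff n).mpr hn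
  have hy'π : π y' = π y := by rw [← hyeq, map_mul, hn1, mul_one]
  have hy'le : normalClosure {y'} ≤ normalClosure {x'} :=
    normalClosure_le_normal (by simpa using hy'H)
  have hy'sup : normalClosure {y'} ⊔ N = normalClosure {y} ⊔ N :=
    ncl_sup_eq_of_mk_eq N hy'π
  have hx'_mem : x' ∈ normalClosure {y'} ⊔ N := by
    rw [hy'sup, ← hx'sup]
    exact mem_sup_left (subset_normalClosure rfl)
  rw [← SetLike.mem_coe, mul_normal] at hx'_mem
  obtain ⟨x'', hx''H, m, hm, hxeq⟩ := hx'_mem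
  have hm1 : π m = 1 := (QuotientGroup.eq_one_iff m).mpr hm
  have hx''π : π x'' = π x := by
    have h2 : π x'' = π x' := by rw [← hxeq, map_mul, hm1, mul_one]
    rw [h2, hx']
  have hx''le : normalClosure {x''} ≤ normalClosure {y'} :=
    normalClosure_le_normal (by simpa using hx''H)
  have hx''S : normalClosure {x''} ∈ S := ⟨x'', hx''π, rfl⟩
  have heq : normalClosure {x''} = normalClosure {x'} := by
    by_contra hne
    exact hmin _ hx''S (lt_of_le_of_ne (hx''le.trans hy'le) hne)
  have heq2 : normalClosure {x''} = normalClosure {y'} :=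
    le_antisymm hx''le (heq ▸ hy'le)
  rcases hG x'' y' heq2 with hc | hc
  · left
    have := π.map_isConj hc
    rwa [hx''π, hy'π] at this
  · right
    have := π.map_isConj hc
    rw [hx''π, map_inv, hy'π] at this
    simpa using this

/-- Quotienting a group by the normal core of a maximal subgroup yields a
primitive group. -/
lemma exists_primitive_of_coatom {M : Subgroup G} (hM : IsCoatom M) :
    ∃ M' : Subgroup (G ⧸ M.normalCore), IsCoatom M' ∧ M'.normalCore = ⊥ := by
  set π := QuotientGroup.mk' M.normalCore with hπ
  have hs : Function.Surjective π := QuotientGroup.mk'_surjective _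
  have hker : π.ker = M.normalCore := QuotientGroup.ker_mk' _
  have hkerle : π.ker ≤ M := by rw [hker]; exact M.normalCore_le
  have hcm : comap π (map π M) = M := comap_map_eq_self hkerle
  refine ⟨M.map π, ⟨?_, ?_⟩, ?_⟩
  · intro htop
    apply hM.1
    have := congrArg (comap π) htop
    rwa [hcm, comap_top] at this
  · intro B hB
    have h1 : M < comap π B := by
      refine lt_of_le_of_ne (le_trans hcm.ge (comap_mono hB.le)) ?_
      intro heq
      have : B = map π M := by
        rw [← map_comap_eq_self_of_surjective hs B, ← heq]
      exact absurd this.symm (ne_of_lt hB)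
    have h2 : comap π B = ⊤ := hM.2 _ h1
    calc B = map π (comap π B) := (map_comap_eq_self_of_surjective hs B).symm
      _ = map π ⊤ := by rw [h2]
      _ = ⊤ := map_top_of_surjective π hs
  · have h1 : comap π (M.map π).normalCore ≤ M :=
      (comap_mono (M.map π).normalCore_le).trans hcm.le
    haveI : ((M.map π).normalCore.comap π).Normal := Subgroup.Normal.comap inferInstance π
    have h2 : comap π (M.map π).normalCore ≤ M.normalCore := normal_le_normalCore.mpr h1
    have h3 : (M.map π).normalCore ≤ ⊥ := by
      rw [← map_comap_eq_self_of_surjective hs (M.map π).normalCore]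
      intro g hg
      obtain ⟨a, ha, rfl⟩ := hg
      have ha2 : a ∈ π.ker := by rw [hker]; exact h2 ha
      simpa [Subgroup.mem_bot] using ha2
    exact le_bot_iff.mp h3

end Aux

theorem MP_frattini_quotient_subdirect (G : Type*) [Group G] [Finite G] [Nontrivial G]
    (hG : MagnusProperty G) :
    ∃ (k : ℕ) (N : Fin k → Subgroup G) (hN : ∀ i, (N i).Normal),
      (∀ i, haveI := hN i
        MagnusProperty (G ⧸ N i) ∧
          ∃ M : Subgroup (G ⧸ N i), IsCoatom M ∧ M.normalCore = ⊥) ∧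
      (⨅ i, N i) = frattini G := by
  haveI : Finite (Subgroup G) :=
    Finite.of_injective (fun H => (H : Set G)) SetLike.coe_injective
  haveI : Finite {M : Subgroup G // IsCoatom M} := Subtype.finite
  obtain ⟨k, ⟨e⟩⟩ := Finite.exists_equiv_fin {M : Subgroup G // IsCoatom M}
  refine ⟨k, fun i => ((e.symm i : Subgroup G)).normalCore, fun i => inferInstance,
    fun i => ⟨hG.quotient _, exists_primitive_of_coatom (e.symm i).2⟩, ?_⟩
  apply le_antisymm
  · rw [frattini, Order.radical]
    refine le_iInf₂ fun M hM => ?_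
    calc (⨅ i, ((e.symm i : Subgroup G)).normalCore)
        ≤ ((e.symm (e ⟨M, hM⟩) : Subgroup G)).normalCore := iInf_le _ _
      _ ≤ M := by rw [Equiv.symm_apply_apply]; exact normalCore_le M
  · refine le_iInf fun i => ?_
    haveI : (frattini G).Normal := inferInstance
    exact normal_le_normalCore.mpr (frattini_le_coatom (e.symm i).2)
end
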